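/- arXiv:math-ph/0505015 — 14 statements merged into one kernel-verified Lean document; each statement's English description precedes it below -/
import Mathlib

section
/- Let I ⊆ ℝ be an open interval, let f, g, h : I → ℝ be smooth with f and g nowhere zero, let A, B : ℝ → ℝ be smooth with A nowhere zero, let δ₁, δ₃, ε₁, ε₂, ε₃ be nonzero real constants and δ₂, δ₄ real constants, and let X : I → ℝ be smooth with X′ nowhere zero (so X is a diffeomorphism of I onto the interval J = X(I)). Suppose u : ℝ × I → ℝ is a smooth solution of f(x)u_t = (g(x)A(u)u_x)_x + h(x)B(u)u_x. Define ũ : ℝ × J → ℝ by ũ(δ₁t+δ₂, X(x)) = δ₃u(t,x)+δ₄, and define f̃, g̃, h̃ on J and Ã, B̃ on ℝ by f̃(X(x)) = ε₁δ₁ f(x)/X′(x), g̃(X(x)) = ε₁ε₂⁻¹X′(x)g(x), h̃(X(x)) = ε₁ε₃⁻¹h(x), Ã(δ₃v+δ₄) = ε₂A(v), B̃(δ₃v+δ₄) = ε₃B(v). Then ũ is a smooth solution of f̃(x̃)ũ_t̃ = (g̃(x̃)Ã(ũ)ũ_x̃)_x̃ + h̃(x̃)B̃(ũ)ũ_x̃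 on ℝ × J (after the affine reparametrization of time t̃ = δ₁t+δ₂). -/
open Set Filter
open scoped ContDiff Topology

/-!
A smooth `X` with nowhere vanishing derivative has smooth local inverses `Y` with
`Y' = 1 / X' ∘ Y`, so every function `w` defined through `w (X x) = φ x` is `w = φ ∘ Y` locally:
it is as smooth as `φ` and `w' (X x) = φ' x / X' x`. Applied to the space variable, to the time
variable (where `X` is the affine map `t ↦ δ₁ t + δ₂`) and to the flux `g̃ Ã(ũ) ũ_x̃`, which
becomes `ε₁ δ₃ g A(u) u_x` in the old variables, this turns the transformed equation into
`ε₁ δ₃ / X'` times the original one.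
-/

theorem ContDiffAt.exists_localInverse {n : WithTop ℕ∞} {X : ℝ → ℝ} {x₀ : ℝ} {s : Set ℝ}
    (hX : ContDiffAt ℝ n X x₀) (hn : n ≠ 0) (hX0 : deriv X x₀ ≠ 0) (hs : s ∈ 𝓝 x₀) :
    ∃ Y : ℝ → ℝ, ContDiffAt ℝ n Y (X x₀) ∧ Y (X x₀) = x₀ ∧
      HasDerivAt Y (deriv X x₀)⁻¹ (X x₀) ∧ ∀ᶠ y in 𝓝 (X x₀), X (Y y) = y ∧ Y y ∈ s := by
  have hfd := ((hX.differentiableAt hn).hasDerivAt).hasFDerivAt_equiv hX0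
  have hstrict := hX.hasStrictFDerivAt' hfd hn
  have hY0 : hX.localInverse hfd hn (X x₀) = x₀ := hX.localInverse_apply_image hfd hn
  have hYc := hX.to_localInverse hfd hn
  refine ⟨hX.localInverse hfd hn, hYc, hY0, ?_, hstrict.eventually_right_inverse.and ?_⟩
  · exact ((hX.hasStrictDerivAt hn).to_local_left_inverse hX0
      hstrict.eventually_left_inverse).hasDerivAt
  · exact hYc.continuousAt.tendsto (by rwa [hY0])

theorem hasDerivAt_of_comp_eq {n : WithTop ℕ∞} {X φ w : ℝ → ℝ} {s : Set ℝ} {x₀ φ' : ℝ}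
    (hX : ContDiffAt ℝ n X x₀) (hn : n ≠ 0) (hX0 : deriv X x₀ ≠ 0) (hs : s ∈ 𝓝 x₀)
    (hφ : HasDerivAt φ φ' x₀) (hw : ∀ x ∈ s, w (X x) = φ x) :
    HasDerivAt w (φ' / deriv X x₀) (X x₀) := by
  obtain ⟨Y, -, hY0, hYd, hXY⟩ := hX.exists_localInverse hn hX0 hs
  have hw_eq : (φ ∘ Y) =ᶠ[𝓝 (X x₀)] w := by
    filter_upwards [hXY] with y ⟨hXy, hYy⟩
    rw [Function.comp_apply, ← hw _ hYy, hXy]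
  rw [div_eq_mul_inv]
  have hφY : HasDerivAt φ φ' (Y (X x₀)) := by rwa [hY0]
  exact (hφY.comp _ hYd).congr_of_eventuallyEq hw_eq.symm

theorem hasDerivAt_of_comp_affine_eq {w φ : ℝ → ℝ} {a b t φ' : ℝ} (ha : a ≠ 0)
    (hφ : HasDerivAt φ φ' t) (hw : ∀ s, w (a * s + b) = φ s) :
    HasDerivAt w (φ' / a) (a * t + b) := by
  have hX : HasDerivAt (fun s => a * s + b) a t := by
    simpa using ((hasDerivAt_id t).const_mul a).add_const b
  simpa [hX.deriv] using hasDerivAt_of_comp_eq (X := fun s => a * s + b) (by fun_prop)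
    one_ne_zero (by rwa [hX.deriv]) univ_mem hφ fun s _ => hw s

theorem contDiffOn_of_comp_affine_prodMap_eq {n : WithTop ℕ∞} {X : ℝ → ℝ} {I : Set ℝ}
    {φ w : ℝ → ℝ → ℝ} {a b : ℝ} (hI : IsOpen I) (hX : ContDiffOn ℝ n X I) (hn : n ≠ 0)
    (hX0 : ∀ x ∈ I, deriv X x ≠ 0) (ha : a ≠ 0)
    (hφ : ContDiffOn ℝ n (fun p : ℝ × ℝ => φ p.1 p.2) (univ ×ˢ I))
    (hw : ∀ t, ∀ x ∈ I, w (a * t + b) (X x) = φ t x) :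
    ContDiffOn ℝ n (fun p : ℝ × ℝ => w p.1 p.2) (univ ×ˢ (X '' I)) := by
  rintro ⟨s, _⟩ ⟨-, x₀, hx₀, rfl⟩
  obtain ⟨Y, hYc, hY0, -, hXY⟩ :=
    (hX.contDiffAt (hI.mem_nhds hx₀)).exists_localInverse hn (hX0 x₀ hx₀) (hI.mem_nhds hx₀)
  have hinv : ContDiffAt ℝ n (fun p : ℝ × ℝ => ((p.1 - b) / a, Y p.2)) (s, X x₀) :=
    ((contDiffAt_fst.sub contDiffAt_const).div_const a).prodMk (hYc.comp (s, X x₀) contDiffAt_snd)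
  have hφ' : ContDiffAt ℝ n (fun p : ℝ × ℝ => φ p.1 p.2) ((s - b) / a, Y (X x₀)) :=
    hφ.contDiffAt ((isOpen_univ.prod hI).mem_nhds ⟨trivial, by rwa [hY0]⟩)
  refine ((hφ'.comp (s, X x₀) hinv).congr_of_eventuallyEq ?_).contDiffWithinAt
  filter_upwards [(continuous_snd.tendsto _).eventually hXY] with p ⟨hXp, hYp⟩
  have hp1 : a * ((p.1 - b) / a) + b = p.1 := by field_simp; ring
  simp only [Function.comp_apply]
  rw [← hw _ _ hYp, hp1, hXp]

theorem ContDiffOn.contDiffOn_apply_left {n : WithTop ℕ∞} {u : ℝ → ℝ → ℝ} {I : Set ℝ}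
    (hu : ContDiffOn ℝ n (fun p : ℝ × ℝ => u p.1 p.2) (univ ×ˢ I)) (t : ℝ) :
    ContDiffOn ℝ n (fun x => u t x) I :=
  hu.comp (contDiffOn_const.prodMk contDiffOn_id) fun _ hx => ⟨trivial, hx⟩

theorem ContDiffOn.contDiff_apply_right {n : WithTop ℕ∞} {u : ℝ → ℝ → ℝ} {I : Set ℝ}
    (hu : ContDiffOn ℝ n (fun p : ℝ × ℝ => u p.1 p.2) (univ ×ˢ I)) (hI : IsOpen I) {x : ℝ}
    (hx : x ∈ I) : ContDiff ℝ n (fun t => u t x) :=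
  contDiff_iff_contDiffAt.2 fun t =>
    (hu.contDiffAt ((isOpen_univ.prod hI).mem_nhds ⟨trivial, hx⟩)).comp t
      (contDiffAt_id.prodMk contDiffAt_const)

theorem differentiableAt_mul_comp_mul_deriv {g A u : ℝ → ℝ} {I : Set ℝ} {x : ℝ}
    (hI : IsOpen I) (hx : x ∈ I) (hg : DifferentiableAt ℝ g x) (hA : Differentiable ℝ A)
    (hu : ContDiffOn ℝ 2 u I) :
    DifferentiableAt ℝ (fun y => g y * A (u y) * deriv u y) x := by
  replace hu := (contDiffOn_succ_iff_deriv_of_isOpen (n := 1) hI).1 hu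
  have hud : DifferentiableAt ℝ u x := hu.1.differentiableAt (hI.mem_nhds hx)
  exact (hg.mul ((hA _).comp x hud)).mul
    ((hu.2.2.contDiffAt (hI.mem_nhds hx)).differentiableAt one_ne_zero)

theorem usual_equivalence_group_of_diffusion_convection_general
    (I : Set ℝ) (hIopen : IsOpen I)
    (f g h : ℝ → ℝ)
    (hg : ContDiffOn ℝ ∞ g I)
    (A B : ℝ → ℝ) (hA : ContDiff ℝ ∞ A)
    (δ₁ δ₂ δ₃ δ₄ ε₁ ε₂ ε₃ : ℝ)
    (hδ₁ : δ₁ ≠ 0) (hε₂ : ε₂ ≠ 0) (hε₃ : ε₃ ≠ 0)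
    (X : ℝ → ℝ) (hX : ContDiffOn ℝ ∞ X I) (hX0 : ∀ x ∈ I, deriv X x ≠ 0)
    (u : ℝ → ℝ → ℝ)
    (hu : ContDiffOn ℝ ∞ (fun p : ℝ × ℝ => u p.1 p.2) (univ ×ˢ I))
    (hpde : ∀ t : ℝ, ∀ x ∈ I,
      f x * deriv (fun s => u s x) t
        = deriv (fun y => g y * A (u t y) * deriv (fun z => u t z) y) x
          + h x * B (u t x) * deriv (fun y => u t y) x)
    (ut : ℝ → ℝ → ℝ) (ft gt ht At Bt : ℝ → ℝ)
    (hutdef : ∀ t : ℝ, ∀ x ∈ I, ut (δ₁ * t + δ₂) (X x) = δ₃ * u t x + δ₄)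
    (hftdef : ∀ x ∈ I, ft (X x) = ε₁ * δ₁ * f x / deriv X x)
    (hgtdef : ∀ x ∈ I, gt (X x) = ε₁ * ε₂⁻¹ * deriv X x * g x)
    (hhtdef : ∀ x ∈ I, ht (X x) = ε₁ * ε₃⁻¹ * h x)
    (hAtdef : ∀ v : ℝ, At (δ₃ * v + δ₄) = ε₂ * A v)
    (hBtdef : ∀ v : ℝ, Bt (δ₃ * v + δ₄) = ε₃ * B v) :
    ContDiffOn ℝ ∞ (fun p : ℝ × ℝ => ut p.1 p.2) (univ ×ˢ (X '' I))
      ∧ ∀ t : ℝ, ∀ x ∈ I,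
          ft (X x) * deriv (fun s => ut s (X x)) (δ₁ * t + δ₂)
            = deriv (fun y => gt y * At (ut (δ₁ * t + δ₂) y)
                * deriv (fun z => ut (δ₁ * t + δ₂) z) y) (X x)
              + ht (X x) * Bt (ut (δ₁ * t + δ₂) (X x))
                * deriv (fun y => ut (δ₁ * t + δ₂) y) (X x) := by
  have hn : (∞ : WithTop ℕ∞) ≠ 0 := by simp
  have hXat : ∀ x ∈ I, ContDiffAt ℝ ∞ X x := fun x hx => hX.contDiffAt (hIopen.mem_nhds hx)
  have hux : ∀ t, ∀ x ∈ I, HasDerivAt (fun y => ut (δ₁ * t + δ₂) y)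
      (δ₃ * deriv (fun z => u t z) x / deriv X x) (X x) := fun t x hx =>
    hasDerivAt_of_comp_eq (φ := fun z => δ₃ * u t z + δ₄) (hXat x hx) hn (hX0 x hx)
      (hIopen.mem_nhds hx)
      ((((hu.contDiffOn_apply_left t).contDiffAt (hIopen.mem_nhds hx)).differentiableAt
        hn).hasDerivAt.const_mul δ₃ |>.add_const δ₄) (hutdef t)
  refine ⟨contDiffOn_of_comp_affine_prodMap_eq hIopen hX hn hX0 hδ₁
    ((contDiffOn_const.mul hu).add contDiffOn_const) hutdef, fun t x hx => ?_⟩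
  have hut : deriv (fun s => ut s (X x)) (δ₁ * t + δ₂) = δ₃ * deriv (fun s => u s x) t / δ₁ :=
    (hasDerivAt_of_comp_affine_eq hδ₁ (((hu.contDiff_apply_right hIopen hx).differentiable
      hn t).hasDerivAt.const_mul δ₃ |>.add_const δ₄) fun s => hutdef s x hx).deriv
  have hflux : deriv (fun y => gt y * At (ut (δ₁ * t + δ₂) y)
        * deriv (fun z => ut (δ₁ * t + δ₂) z) y) (X x)
      = ε₁ * δ₃ * deriv (fun y => g y * A (u t y) * deriv (fun z => u t z) y) x
        / deriv X x := by
    have hflux_diff := differentiableAt_mul_comp_mul_deriv hIopen hx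
      ((hg.contDiffAt (hIopen.mem_nhds hx)).differentiableAt hn) (hA.differentiable hn)
      ((hu.contDiffOn_apply_left t).of_le ENat.LEInfty.out)
    refine (hasDerivAt_of_comp_eq (hXat x hx) hn (hX0 x hx) (hIopen.mem_nhds hx)
      (hflux_diff.hasDerivAt.const_mul (ε₁ * δ₃)) fun y hy => ?_).deriv
    rw [hgtdef y hy, hutdef t y hy, hAtdef, (hux t y hy).deriv]
    field_simp [hX0 y hy]
  rw [hftdef x hx, hhtdef x hx, hut, hflux, (hux t x hx).deriv, hutdef t x hx, hBtdef]
  field_simp [hX0 x hx]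
  linear_combination ε₁ * δ₃ * hpde t x hx

/-- The usual equivalence group `G∼` of the class
`f(x) u_t = (g(x) A(u) u_x)_x + h(x) B(u) u_x` acts by
`t̃ = δ₁ t + δ₂`, `x̃ = X(x)`, `ũ = δ₃ u + δ₄`,
`f̃ = ε₁ δ₁ f / X'`, `g̃ = ε₁ ε₂⁻¹ X' g`, `h̃ = ε₁ ε₃⁻¹ h`, `Ã = ε₂ A`, `B̃ = ε₃ B`:
every such transformation maps any smooth solution `u` of the original equation to a
smooth solution `ũ` (written `ut` below) of the transformed equation on `ℝ × X(I)`. -/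
theorem usual_equivalence_group_of_diffusion_convection
    (I : Set ℝ) (hIopen : IsOpen I) (hIconn : Convex ℝ I)
    (f g h : ℝ → ℝ)
    (hf : ContDiffOn ℝ ∞ f I) (hg : ContDiffOn ℝ ∞ g I) (hh : ContDiffOn ℝ ∞ h I)
    (hf0 : ∀ x ∈ I, f x ≠ 0) (hg0 : ∀ x ∈ I, g x ≠ 0)
    (A B : ℝ → ℝ) (hA : ContDiff ℝ ∞ A) (hB : ContDiff ℝ ∞ B)
    (hA0 : ∀ v : ℝ, A v ≠ 0)
    (δ₁ δ₂ δ₃ δ₄ ε₁ ε₂ ε₃ : ℝ)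
    (hδ₁ : δ₁ ≠ 0) (hδ₃ : δ₃ ≠ 0) (hε₁ : ε₁ ≠ 0) (hε₂ : ε₂ ≠ 0) (hε₃ : ε₃ ≠ 0)
    (X : ℝ → ℝ) (hX : ContDiffOn ℝ ∞ X I) (hX0 : ∀ x ∈ I, deriv X x ≠ 0)
    (u : ℝ → ℝ → ℝ)
    (hu : ContDiffOn ℝ ∞ (fun p : ℝ × ℝ => u p.1 p.2) (univ ×ˢ I))
    (hpde : ∀ t : ℝ, ∀ x ∈ I,
      f x * deriv (fun s => u s x) t
        = deriv (fun y => g y * A (u t y) * deriv (fun z => u t z) y) x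
          + h x * B (u t x) * deriv (fun y => u t y) x)
    (ut : ℝ → ℝ → ℝ) (ft gt ht At Bt : ℝ → ℝ)
    (hutdef : ∀ t : ℝ, ∀ x ∈ I, ut (δ₁ * t + δ₂) (X x) = δ₃ * u t x + δ₄)
    (hftdef : ∀ x ∈ I, ft (X x) = ε₁ * δ₁ * f x / deriv X x)
    (hgtdef : ∀ x ∈ I, gt (X x) = ε₁ * ε₂⁻¹ * deriv X x * g x)
    (hhtdef : ∀ x ∈ I, ht (X x) = ε₁ * ε₃⁻¹ * h x)
    (hAtdef : ∀ v : ℝ, At (δ₃ * v + δ₄) = ε₂ * A v)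
    (hBtdef : ∀ v : ℝ, Bt (δ₃ * v + δ₄) = ε₃ * B v) :
    ContDiffOn ℝ ∞ (fun p : ℝ × ℝ => ut p.1 p.2) (univ ×ˢ (X '' I))
      ∧ ∀ t : ℝ, ∀ x ∈ I,
          ft (X x) * deriv (fun s => ut s (X x)) (δ₁ * t + δ₂)
            = deriv (fun y => gt y * At (ut (δ₁ * t + δ₂) y)
                * deriv (fun z => ut (δ₁ * t + δ₂) z) y) (X x)
              + ht (X x) * Bt (ut (δ₁ * t + δ₂) (X x))
                * deriv (fun y => ut (δ₁ * t + δ₂) y) (X x) :=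
  usual_equivalence_group_of_diffusion_convection_general I hIopen f g h hg A B hA δ₁ δ₂ δ₃ δ₄ ε₁ ε₂
    ε₃ hδ₁ hε₂ hε₃ X hX hX0 u hu hpde ut ft gt ht At Bt hutdef hftdef hgtdef hhtdef hAtdef hBtdef
end

section
/- Let I ⊆ ℝ be an open interval, let f, g, h : I → ℝ be smooth with f and g nowhere zero, let A, B : ℝ → ℝ be smooth, let ε₁, ε₂, ε₃ be nonzero real constants and ε₄ a real constant, and let φ : I → ℝ be a smooth function satisfying φ > 0 and φ′(x) = −ε₄·(h(x)/g(x))·φ(x) for all x ∈ I (i.e. φ = exp(−ε₄∫(h/g)dx)). Define f̃ = ε₁φf, g̃ = ε₁ε₂⁻¹φg, h̃ = ε₁ε₃⁻¹φh, Ã = ε₂A, B̃(v) = ε₃(B(v)+ε₄A(v)). Then for every smooth function u : ℝ × I → ℝ (not assumed to solve anything) the pointwise identity f̃(x)u_t − (g̃(x)Ã(u)u_x)_x − h̃(x)B̃(u)u_x = ε₁φ(x)·[f(x)u_t − (g(x)A(u)u_x)_x − h(x)B(u)u_x] holds; in particular, u solves f u_t = (gA(u)u_x)_x + hB(u)u_x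 if and only if u solves f̃ u_t = (g̃Ã(u)u_x)_x + h̃B̃(u)u_x. -/
open Set Real
open scoped ContDiff

/-- Gauge equivalence transformations. With `φ = exp(-ε₄ ∫ (h/g) dx)` (i.e.
`φ > 0` and `φ' = -ε₄ (h/g) φ`), and `f̃ = ε₁ φ f`, `g̃ = ε₁ ε₂⁻¹ φ g`, `h̃ = ε₁ ε₃⁻¹ φ h`,
`Ã = ε₂ A`, `B̃ = ε₃(B + ε₄ A)`, the pointwise identity
`f̃ u_t - (g̃ Ã(u) u_x)_x - h̃ B̃(u) u_x = ε₁ φ (f u_t - (g A(u) u_x)_x - h B(u) u_x)`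
holds for every smooth `u`; in particular `u` solves the original equation iff it solves
the gauge-transformed one. -/
theorem gauge_equivalence_transformation
    (I : Set ℝ) (hIopen : IsOpen I) (hIconn : Convex ℝ I)
    (f g h : ℝ → ℝ)
    (hf : ContDiffOn ℝ ∞ f I) (hg : ContDiffOn ℝ ∞ g I) (hh : ContDiffOn ℝ ∞ h I)
    (hf0 : ∀ x ∈ I, f x ≠ 0) (hg0 : ∀ x ∈ I, g x ≠ 0)
    (A B : ℝ → ℝ) (hA : ContDiff ℝ ∞ A) (hB : ContDiff ℝ ∞ B)
    (ε₁ ε₂ ε₃ ε₄ : ℝ) (hε₁ : ε₁ ≠ 0) (hε₂ : ε₂ ≠ 0) (hε₃ : ε₃ ≠ 0)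
    (φ : ℝ → ℝ) (hφ : ContDiffOn ℝ ∞ φ I) (hφpos : ∀ x ∈ I, 0 < φ x)
    (hφ' : ∀ x ∈ I, HasDerivAt φ (-ε₄ * (h x / g x) * φ x) x)
    (u : ℝ → ℝ → ℝ)
    (hu : ContDiffOn ℝ ∞ (fun p : ℝ × ℝ => u p.1 p.2) (univ ×ˢ I)) :
    (∀ t : ℝ, ∀ x ∈ I,
      (ε₁ * φ x * f x) * deriv (fun s => u s x) t
        - deriv (fun y => (ε₁ * ε₂⁻¹ * φ y * g y) * (ε₂ * A (u t y))
            * deriv (fun z => u t z) y) x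
        - (ε₁ * ε₃⁻¹ * φ x * h x) * (ε₃ * (B (u t x) + ε₄ * A (u t x)))
            * deriv (fun y => u t y) x
      = ε₁ * φ x *
          (f x * deriv (fun s => u s x) t
            - deriv (fun y => g y * A (u t y) * deriv (fun z => u t z) y) x
            - h x * B (u t x) * deriv (fun y => u t y) x))
    ∧ ((∀ t : ℝ, ∀ x ∈ I,
          f x * deriv (fun s => u s x) t
            = deriv (fun y => g y * A (u t y) * deriv (fun z => u t z) y) x
              + h x * B (u t x) * deriv (fun y => u t y) x)
        ↔ (∀ t : ℝ, ∀ x ∈ I,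
          (ε₁ * φ x * f x) * deriv (fun s => u s x) t
            = deriv (fun y => (ε₁ * ε₂⁻¹ * φ y * g y) * (ε₂ * A (u t y))
                * deriv (fun z => u t z) y) x
              + (ε₁ * ε₃⁻¹ * φ x * h x) * (ε₃ * (B (u t x) + ε₄ * A (u t x)))
                * deriv (fun y => u t y) x)) := by

  have main : ∀ t : ℝ, ∀ x ∈ I,
      (ε₁ * φ x * f x) * deriv (fun s => u s x) t
        - deriv (fun y => (ε₁ * ε₂⁻¹ * φ y * g y) * (ε₂ * A (u t y))
            * deriv (fun z => u t z) y) x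
        - (ε₁ * ε₃⁻¹ * φ x * h x) * (ε₃ * (B (u t x) + ε₄ * A (u t x)))
            * deriv (fun y => u t y) x
      = ε₁ * φ x *
          (f x * deriv (fun s => u s x) t
            - deriv (fun y => g y * A (u t y) * deriv (fun z => u t z) y) x
            - h x * B (u t x) * deriv (fun y => u t y) x) := by
    intro t x hx
    have hw : ContDiffOn ℝ ∞ (fun z => u t z) I := by
      have hmap : Set.MapsTo (fun y : ℝ => ((t, y) : ℝ × ℝ)) I (univ ×ˢ I) :=
        fun y hy => ⟨mem_univ t, hy⟩
      exact hu.comp ((contDiff_const.prodMk contDiff_id).contDiffOn) hmap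
    have hw' : ContDiffOn ℝ ∞ (deriv (fun z => u t z)) I :=
      hw.deriv_of_isOpen hIopen (by simp)
    set F : ℝ → ℝ := fun y => g y * A (u t y) * deriv (fun z => u t z) y with hFdef
    have hFdiff : DifferentiableOn ℝ F I := by
      apply DifferentiableOn.mul
      · exact (hg.differentiableOn (by norm_num)).mul
          ((hA.comp_contDiffOn hw).differentiableOn (by norm_num))
      · exact hw'.differentiableOn (by norm_num)
    have hFx : HasDerivAt F (deriv F x) x :=
      ((hFdiff x hx).differentiableAt (hIopen.mem_nhds hx)).hasDerivAt
    have hφx : HasDerivAt φ (-ε₄ * (h x / g x) * φ x) x := hφ' x hx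
    have hprod : HasDerivAt (fun y => ε₁ * (φ y * F y))
        (ε₁ * ((-ε₄ * (h x / g x) * φ x) * F x + φ x * deriv F x)) x :=
      (hφx.mul hFx).const_mul ε₁
    have hGeq : (fun y => (ε₁ * ε₂⁻¹ * φ y * g y) * (ε₂ * A (u t y))
        * deriv (fun z => u t z) y) = fun y => ε₁ * (φ y * F y) := by
      funext y
      simp only [hFdef]
      field_simp
    have hderivG : deriv (fun y => (ε₁ * ε₂⁻¹ * φ y * g y) * (ε₂ * A (u t y))
        * deriv (fun z => u t z) y) x
        = ε₁ * ((-ε₄ * (h x / g x) * φ x) * F x + φ x * deriv F x) := by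
      rw [hGeq]; exact hprod.deriv
    rw [hderivG]
    have hgx : g x ≠ 0 := hg0 x hx
    simp only [hFdef]
    field_simp
    ring
  refine ⟨main, ?_, ?_⟩
  · intro H t x hx
    have key := main t x hx
    have h0 : f x * deriv (fun s => u s x) t
        - deriv (fun y => g y * A (u t y) * deriv (fun z => u t z) y) x
        - h x * B (u t x) * deriv (fun y => u t y) x = 0 := by
      have := H t x hx; linarith
    rw [h0, mul_zero] at key
    linarith
  · intro H t x hx
    have key := main t x hx
    have h1 : ε₁ * φ x *
        (f x * deriv (fun s => u s x) t
          - deriv (fun y => g y * A (u t y) * deriv (fun z => u t z) y) x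
          - h x * B (u t x) * deriv (fun y => u t y) x) = 0 := by
      have := H t x hx; linarith
    have hne : ε₁ * φ x ≠ 0 := mul_ne_zero hε₁ (hφpos x hx).ne'
    have h2 := (mul_eq_zero.mp h1).resolve_left hne
    linarith
end

section
/- Let A : ℝ → ℝ be smooth and let 𝔄 : ℝ → ℝ be smooth with 𝔄′ = A. Then for every smooth solution u : ℝ × ℝ → ℝ of the equation u_t = (A(u)u_x)_x + u_x (the case B = 1, f = 1, h = 1), both pairs F₁ = u, G₁ = −A(u)u_x − u and F₂ = (x+t)u, G₂ = −(x+t)(A(u)u_x + u) + 𝔄(u) satisfy the conservation-law identity ∂_t F + ∂_x G = 0 at every point of ℝ × ℝ. -/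
open scoped ContDiff

/-! Writing `g = A(u) u_x`, the equation reads `u_t = g_x + u_x`, so the first law is the
equation itself in divergence form. For the second, `∂ₓ 𝔄(u) = A(u) u_x = g` cancels the
term `-g` that the factor `x + t` produces in `∂ₓ G₂`, leaving `∂ₓ G₂ = -u - (x + t) u_t`,
which is exactly `-∂ₜ F₂`. -/

theorem differentiable_comp_mul_deriv {A v : ℝ → ℝ} (hA : Differentiable ℝ A)
    (hv : ContDiff ℝ 2 v) : Differentiable ℝ fun y => A (v y) * deriv v y :=
  (hA.comp (hv.differentiable (by simp))).mul hv.differentiable_deriv_two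

theorem hasDerivAt_const_add_mul {w : ℝ → ℝ} {w' : ℝ} (x t : ℝ) (hw : HasDerivAt w w' t) :
    HasDerivAt (fun s => (x + s) * w s) (w t + (x + t) * w') t :=
  (((hasDerivAt_id' t).const_add x).mul hw).congr_deriv (by ring)

theorem hasDerivAt_neg_add_mul_add_comp {A FA g v : ℝ → ℝ} {g' v' x : ℝ} (t : ℝ)
    (hFA : HasDerivAt FA (A (v x)) (v x)) (hg : HasDerivAt g g' x) (hv : HasDerivAt v v' x)
    (hgx : g x = A (v x) * v') :
    HasDerivAt (fun y => -((y + t) * (g y + v y)) + FA (v y))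
      (-v x - (x + t) * (g' + v')) x :=
  ((((hasDerivAt_id' x).add_const t).mul (hg.add hv)).neg.add (hFA.comp x hv)).congr_deriv
    (by rw [Pi.add_apply, hgx]; ring)

theorem conservation_laws_case_B_one_f_one_h_one_general
    (A FA : ℝ → ℝ) (hA : ContDiff ℝ ∞ A)
    (hFA' : ∀ v : ℝ, HasDerivAt FA (A v) v)
    (u : ℝ → ℝ → ℝ)
    (hu : ContDiff ℝ ∞ (fun p : ℝ × ℝ => u p.1 p.2))
    (hpde : ∀ t x : ℝ,
      deriv (fun s => u s x) t
        = deriv (fun y => A (u t y) * deriv (fun z => u t z) y) x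
          + deriv (fun y => u t y) x) :
    ∀ t x : ℝ,
      (deriv (fun s => u s x) t
        + deriv (fun y =>
            -(A (u t y) * deriv (fun z => u t z) y) - u t y) x = 0)
      ∧ (deriv (fun s => (x + s) * u s x) t
        + deriv (fun y =>
            -((y + t) * (A (u t y) * deriv (fun z => u t z) y + u t y))
              + FA (u t y)) x = 0) := by
  intro t x
  have hux : ContDiff ℝ ∞ (fun y => u t y) := hu.comp (contDiff_prodMk_right t)
  have hut : ContDiff ℝ ∞ (fun s => u s x) := hu.comp (contDiff_prodMk_left x)
  set g : ℝ → ℝ := fun y => A (u t y) * deriv (fun z => u t z) y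
  have hgd : HasDerivAt g (deriv g x) x :=
    (differentiable_comp_mul_deriv (hA.differentiable (by simp)) (hux.of_le (by norm_cast))
      x).hasDerivAt
  have huxd : HasDerivAt (fun y => u t y) (deriv (fun y => u t y) x) x :=
    (hux.differentiable (by simp) x).hasDerivAt
  have hutd : HasDerivAt (fun s => u s x) (deriv (fun s => u s x) t) t :=
    (hut.differentiable (by simp) t).hasDerivAt
  have hpde' : deriv (fun s => u s x) t = deriv g x + deriv (fun y => u t y) x := hpde t x
  constructor
  · have hG₁ : HasDerivAt (fun y => -g y - u t y) _ x := hgd.neg.sub huxd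
    rw [hG₁.deriv, hpde']
    ring
  · rw [(hasDerivAt_const_add_mul x t hutd).deriv,
      (hasDerivAt_neg_add_mul_add_comp t (hFA' _) hgd huxd rfl).deriv, hpde']
    ring

/-- For the equation `u_t = (A(u) u_x)_x + u_x` (the case `B = 1`, `f = 1`,
`h = 1`), both pairs `F₁ = u`, `G₁ = -A(u) u_x - u` and `F₂ = (x+t) u`,
`G₂ = -(x+t)(A(u) u_x + u) + 𝔄(u)` (where `𝔄' = A`) are conserved vectors. -/
theorem conservation_laws_case_B_one_f_one_h_one
    (A FA : ℝ → ℝ) (hA : ContDiff ℝ ∞ A)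
    (hFA : ContDiff ℝ ∞ FA) (hFA' : ∀ v : ℝ, HasDerivAt FA (A v) v)
    (u : ℝ → ℝ → ℝ)
    (hu : ContDiff ℝ ∞ (fun p : ℝ × ℝ => u p.1 p.2))
    (hpde : ∀ t x : ℝ,
      deriv (fun s => u s x) t
        = deriv (fun y => A (u t y) * deriv (fun z => u t z) y) x
          + deriv (fun y => u t y) x) :
    ∀ t x : ℝ,
      (deriv (fun s => u s x) t
        + deriv (fun y =>
            -(A (u t y) * deriv (fun z => u t z) y) - u t y) x = 0)
      ∧ (deriv (fun s => (x + s) * u s x) t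
        + deriv (fun y =>
            -((y + t) * (A (u t y) * deriv (fun z => u t z) y + u t y))
              + FA (u t y)) x = 0) :=
  conservation_laws_case_B_one_f_one_h_one_general A FA hA hFA' u hu hpde
end

section
/- Let A : ℝ → ℝ be smooth and let 𝔄 : ℝ → ℝ be smooth with 𝔄′ = A. Then for every smooth solution u : ℝ × ℝ → ℝ of the equation e^x u_t = (A(u)u_x)_x + e^x u_x (the case B = 1, f = e^x, h = e^x), both pairs F₁ = e^{x+t}u, G₁ = −e^t(A(u)u_x + e^x u) and F₂ = e^{x+t}(x+t)u, G₂ = −e^t(x+t)(A(u)u_x + e^x u) + e^t𝔄(u) satisfy the conservation-law identity ∂_t F + ∂_x G = 0 at every point of ℝ × ℝ. -/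
open Real
open scoped ContDiff

/-!
For a time slice put `Φ = A(u) u_x + e^x u`. Since `(e^x u)_x = e^x u + e^x u_x`, the equation says
exactly `Φ_x = e^x (u_t + u)`, hence `∂_t (e^{x+t} u) = e^t Φ_x`, which gives the first law. For the
second, `∂_t (e^{x+t} (x+t) u) = e^t (x+t) Φ_x + e^{x+t} u`, while differentiating the factor `x + t`
in `-e^t (x+t) Φ` produces `-e^t A(u) u_x - e^{x+t} u`; the term `e^t 𝔄(u)` removes the `A(u) u_x` part.
-/

theorem hasDerivAt_flux_of_pde {A w : ℝ → ℝ} {x ut : ℝ} (hA : DifferentiableAt ℝ A (w x))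
    (hw : DifferentiableAt ℝ w x) (hw' : DifferentiableAt ℝ (deriv w) x)
    (hpde : exp x * ut = deriv (fun y => A (w y) * deriv w y) x + exp x * deriv w x) :
    HasDerivAt (fun y => A (w y) * deriv w y + exp y * w y) (exp x * (ut + w x)) x := by
  have hdiff : HasDerivAt (fun y => A (w y) * deriv w y)
      (deriv (fun y => A (w y) * deriv w y) x) x :=
    ((hA.comp x hw).mul hw').hasDerivAt
  exact (hdiff.add ((hasDerivAt_exp x).mul hw.hasDerivAt)).congr_deriv
    (by linear_combination -hpde)

theorem conservation_laws_case_B_one_f_exp_h_exp_general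
    (A FA : ℝ → ℝ) (hA : ContDiff ℝ ∞ A)
    (hFA' : ∀ v : ℝ, HasDerivAt FA (A v) v)
    (u : ℝ → ℝ → ℝ)
    (hu : ContDiff ℝ ∞ (fun p : ℝ × ℝ => u p.1 p.2))
    (hpde : ∀ t x : ℝ,
      Real.exp x * deriv (fun s => u s x) t
        = deriv (fun y => A (u t y) * deriv (fun z => u t z) y) x
          + Real.exp x * deriv (fun y => u t y) x) :
    ∀ t x : ℝ,
      (deriv (fun s => Real.exp (x + s) * u s x) t
        + deriv (fun y =>
            -(Real.exp t * (A (u t y) * deriv (fun z => u t z) y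
                + Real.exp y * u t y))) x = 0)
      ∧ (deriv (fun s => Real.exp (x + s) * (x + s) * u s x) t
        + deriv (fun y =>
            -(Real.exp t * (y + t) * (A (u t y) * deriv (fun z => u t z) y
                + Real.exp y * u t y))
              + Real.exp t * FA (u t y)) x = 0) := by
  intro t x
  have hux : ContDiff ℝ ∞ (fun y => u t y) := hu.comp (contDiff_const.prodMk contDiff_id)
  have hut : ContDiff ℝ ∞ (fun s => u s x) := hu.comp (contDiff_id.prodMk contDiff_const)
  have hflux := hasDerivAt_flux_of_pde (hA.differentiable (by simp) _)
    (hux.differentiable (by simp) x)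
    ((contDiff_infty_iff_deriv.mp hux).2.differentiable (by simp) x) (hpde t x)
  have hdt := (hut.differentiable (by simp) t).hasDerivAt
  have hlin : HasDerivAt (fun s => x + s) 1 t := (hasDerivAt_id t).const_add x
  have hexp : HasDerivAt (fun s => exp (x + s)) (exp (x + t) * 1) t := hlin.exp
  constructor
  · have hF : HasDerivAt (fun s => exp (x + s) * u s x)
        (exp (x + t) * 1 * u t x + exp (x + t) * deriv (fun s => u s x) t) t :=
      hexp.mul hdt
    have hG : HasDerivAt (fun y => -(exp t * (A (u t y) * deriv (fun z => u t z) y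
          + exp y * u t y)))
        (-(exp t * (exp x * (deriv (fun s => u s x) t + u t x)))) x :=
      (hflux.const_mul (exp t)).neg
    rw [hF.deriv, hG.deriv, exp_add]
    ring
  · have hF : HasDerivAt (fun s => exp (x + s) * (x + s) * u s x)
        ((exp (x + t) * 1 * (x + t) + exp (x + t) * 1) * u t x
          + exp (x + t) * (x + t) * deriv (fun s => u s x) t) t :=
      (hexp.mul hlin).mul hdt
    have hG : HasDerivAt (fun y => -(exp t * (y + t) * (A (u t y) * deriv (fun z => u t z) y
          + exp y * u t y)) + exp t * FA (u t y))
        (-(exp t * 1 * (A (u t x) * deriv (fun z => u t z) x + exp x * u t x)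
          + exp t * (x + t) * (exp x * (deriv (fun s => u s x) t + u t x)))
          + exp t * (A (u t x) * deriv (fun z => u t z) x)) x :=
      ((((hasDerivAt_id x).add_const t).const_mul (exp t)).mul hflux).neg.add
        (((hFA' (u t x)).comp x (hux.differentiable (by simp) x).hasDerivAt).const_mul (exp t))
    rw [hF.deriv, hG.deriv, exp_add]
    ring

/-- For the equation `e^x u_t = (A(u) u_x)_x + e^x u_x` (the case `B = 1`,
`f = e^x`, `h = e^x`), both pairs `F₁ = e^{x+t} u`, `G₁ = -e^t (A(u) u_x + e^x u)` and
`F₂ = e^{x+t}(x+t) u`, `G₂ = -e^t (x+t)(A(u) u_x + e^x u) + e^t 𝔄(u)` (where `𝔄' = A`)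
are conserved vectors. -/
theorem conservation_laws_case_B_one_f_exp_h_exp
    (A FA : ℝ → ℝ) (hA : ContDiff ℝ ∞ A)
    (hFA : ContDiff ℝ ∞ FA) (hFA' : ∀ v : ℝ, HasDerivAt FA (A v) v)
    (u : ℝ → ℝ → ℝ)
    (hu : ContDiff ℝ ∞ (fun p : ℝ × ℝ => u p.1 p.2))
    (hpde : ∀ t x : ℝ,
      Real.exp x * deriv (fun s => u s x) t
        = deriv (fun y => A (u t y) * deriv (fun z => u t z) y) x
          + Real.exp x * deriv (fun y => u t y) x) :
    ∀ t x : ℝ,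
      (deriv (fun s => Real.exp (x + s) * u s x) t
        + deriv (fun y =>
            -(Real.exp t * (A (u t y) * deriv (fun z => u t z) y
                + Real.exp y * u t y))) x = 0)
      ∧ (deriv (fun s => Real.exp (x + s) * (x + s) * u s x) t
        + deriv (fun y =>
            -(Real.exp t * (y + t) * (A (u t y) * deriv (fun z => u t z) y
                + Real.exp y * u t y))
              + Real.exp t * FA (u t y)) x = 0) :=
  conservation_laws_case_B_one_f_exp_h_exp_general A FA hA hFA' u hu hpde
end

section
/- Let μ ∈ ℝ, let A : ℝ → ℝ be smooth, and let 𝔄 : ℝ → ℝ be smooth with 𝔄′ = A. Then for every smooth solution u : ℝ × (0,∞) → ℝ of the equation x^{μ−1}u_t = (A(u)u_x)_x + x^{μ}u_x (the case B = 1, f = x^{μ−1}, h = x^{μ}), both pairs F₁ = x^{μ−1}e^{μt}u, G₁ = −e^{μt}(A(u)u_x + x^{μ}u) and F₂ = x^{μ}e^{(μ+1)t}u, G₂ = e^{(μ+1)t}(−x·A(u)u_x − x^{μ+1}u + 𝔄(u)) satisfy the conservation-law identity ∂_t F + ∂_x G = 0 at every point of ℝ × (0,∞). -/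
/-!
Both identities are pointwise algebra once the partial derivatives exist. Multiplying the
equation by `e^{μt}` turns `∂_t F₁` into `e^{μt}(μ x^{μ-1} u + (A(u) u_x)_x + x^μ u_x)`, which is
exactly `-∂_x G₁`. Multiplying it by `x e^{(μ+1)t}` does the same for the second pair: the term
`A(u) u_x` produced by differentiating `x · A(u) u_x` is cancelled by `∂_x 𝔄(u)`.
-/

open Set Real
open scoped ContDiff

section Regularity

variable {u : ℝ → ℝ → ℝ} {n : WithTop ℕ∞} {s : Set ℝ}

lemma contDiffOn_slice_snd (hu : ContDiffOn ℝ n (fun p : ℝ × ℝ => u p.1 p.2) (univ ×ˢ s))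
    (t : ℝ) : ContDiffOn ℝ n (fun y => u t y) s :=
  hu.comp (contDiff_const.prodMk contDiff_id).contDiffOn fun _ hy => ⟨mem_univ _, hy⟩

lemma differentiableAt_slice_fst (hs : IsOpen s) (hn : n ≠ 0)
    (hu : ContDiffOn ℝ n (fun p : ℝ × ℝ => u p.1 p.2) (univ ×ˢ s)) (t : ℝ) {x : ℝ}
    (hx : x ∈ s) : DifferentiableAt ℝ (fun τ => u τ x) t := by
  have hux : ContDiffAt ℝ n (fun p : ℝ × ℝ => u p.1 p.2) (t, x) :=
    hu.contDiffAt ((isOpen_univ.prod hs).mem_nhds ⟨mem_univ _, hx⟩)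
  exact (hux.comp t (contDiffAt_id.prodMk contDiffAt_const)).differentiableAt hn

end Regularity

lemma differentiableAt_comp_mul_deriv {A v : ℝ → ℝ} {s : Set ℝ} {x : ℝ}
    (hA : Differentiable ℝ A) (hs : IsOpen s) (hv : ContDiffOn ℝ 2 v s) (hx : x ∈ s) :
    DifferentiableAt ℝ (fun y => A (v y) * deriv v y) x := by
  have hv' : ContDiffOn ℝ 1 (deriv v) s := hv.deriv_of_isOpen hs (by norm_num)
  have hxs : s ∈ nhds x := hs.mem_nhds hx
  exact ((hA _).comp x ((hv.differentiableOn (by norm_num)).differentiableAt hxs)).mul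
    ((hv'.differentiableOn (by norm_num)).differentiableAt hxs)

section ConservationLaws

variable {μ t x Ut Ux Φ : ℝ} {A : ℝ → ℝ} {u : ℝ → ℝ → ℝ}

lemma hasDerivAt_rpow_succ (hx : x ≠ 0) :
    HasDerivAt (fun y : ℝ => y ^ (μ + 1)) ((μ + 1) * x ^ μ) x := by
  simpa using hasDerivAt_rpow_const (p := μ + 1) (Or.inl hx)

variable (hx : x ≠ 0) (hUt : HasDerivAt (fun s => u s x) Ut t)
  (hUx : HasDerivAt (fun y => u t y) Ux x)
  (hflux : HasDerivAt (fun y => A (u t y) * deriv (fun z => u t z) y) Φ x)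
  (hpde : x ^ (μ - 1) * Ut = Φ + x ^ μ * Ux)
include hx hUt hUx hflux hpde

lemma conservation_law_exp_mul :
    deriv (fun s => x ^ (μ - 1) * exp (μ * s) * u s x) t
      + deriv (fun y =>
          -(exp (μ * t) * (A (u t y) * deriv (fun z => u t z) y + y ^ μ * u t y))) x = 0 := by
  have hF : HasDerivAt (fun s => x ^ (μ - 1) * exp (μ * s) * u s x)
      (x ^ (μ - 1) * (exp (μ * t) * (μ * 1)) * u t x + x ^ (μ - 1) * exp (μ * t) * Ut) t :=
    ((((hasDerivAt_id t).const_mul μ).exp).const_mul _).mul hUt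
  have hG : HasDerivAt
      (fun y => -(exp (μ * t) * (A (u t y) * deriv (fun z => u t z) y + y ^ μ * u t y)))
      (-(exp (μ * t) * (Φ + (μ * x ^ (μ - 1) * u t x + x ^ μ * Ux)))) x :=
    ((hflux.add ((hasDerivAt_rpow_const (Or.inl hx)).mul hUx)).const_mul _).neg
  rw [hF.deriv, hG.deriv]
  linear_combination exp (μ * t) * hpde

variable {𝔄 : ℝ → ℝ}

lemma conservation_law_exp_succ_mul (h𝔄 : HasDerivAt 𝔄 (A (u t x)) (u t x)) :
    deriv (fun s => x ^ μ * exp ((μ + 1) * s) * u s x) t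
      + deriv (fun y => exp ((μ + 1) * t)
          * (-(y * A (u t y) * deriv (fun z => u t z) y) - y ^ (μ + 1) * u t y
            + 𝔄 (u t y))) x = 0 := by
  have hF : HasDerivAt (fun s => x ^ μ * exp ((μ + 1) * s) * u s x)
      (x ^ μ * (exp ((μ + 1) * t) * ((μ + 1) * 1)) * u t x
        + x ^ μ * exp ((μ + 1) * t) * Ut) t :=
    ((((hasDerivAt_id t).const_mul (μ + 1)).exp).const_mul _).mul hUt
  have hxflux : HasDerivAt (fun y => y * A (u t y) * deriv (fun z => u t z) y)
      (A (u t x) * Ux + x * Φ) x := by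
    simpa only [one_mul, hUx.deriv, mul_assoc] using (hasDerivAt_id' x).fun_mul hflux
  have hG : HasDerivAt (fun y => exp ((μ + 1) * t)
        * (-(y * A (u t y) * deriv (fun z => u t z) y) - y ^ (μ + 1) * u t y + 𝔄 (u t y)))
      (exp ((μ + 1) * t) * (-(A (u t x) * Ux + x * Φ)
        - ((μ + 1) * x ^ μ * u t x + x ^ (μ + 1) * Ux) + A (u t x) * Ux)) x :=
    ((hxflux.neg.sub ((hasDerivAt_rpow_succ hx).mul hUx)).add (h𝔄.comp x hUx)).const_mul _
  rw [hF.deriv, hG.deriv]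
  have hpow : x ^ μ = x ^ (μ - 1) * x := by rw [← rpow_add_one hx, sub_add_cancel]
  linear_combination exp ((μ + 1) * t) * (x * hpde + Ut * hpow - Ux * rpow_add_one hx μ)

end ConservationLaws

theorem conservation_laws_case_B_one_f_pow_h_pow_general
    (μ : ℝ) (A FA : ℝ → ℝ) (hA : ContDiff ℝ ∞ A)
    (hFA' : ∀ v : ℝ, HasDerivAt FA (A v) v)
    (u : ℝ → ℝ → ℝ)
    (hu : ContDiffOn ℝ ∞ (fun p : ℝ × ℝ => u p.1 p.2) (univ ×ˢ Ioi 0))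
    (hpde : ∀ t : ℝ, ∀ x ∈ Ioi (0:ℝ),
      x ^ (μ - 1) * deriv (fun s => u s x) t
        = deriv (fun y => A (u t y) * deriv (fun z => u t z) y) x
          + x ^ μ * deriv (fun y => u t y) x) :
    ∀ t : ℝ, ∀ x ∈ Ioi (0:ℝ),
      (deriv (fun s => x ^ (μ - 1) * Real.exp (μ * s) * u s x) t
        + deriv (fun y =>
            -(Real.exp (μ * t) * (A (u t y) * deriv (fun z => u t z) y
                + y ^ μ * u t y))) x = 0)
      ∧ (deriv (fun s => x ^ μ * Real.exp ((μ + 1) * s) * u s x) t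
        + deriv (fun y =>
            Real.exp ((μ + 1) * t)
              * (-(y * A (u t y) * deriv (fun z => u t z) y)
                 - y ^ (μ + 1) * u t y + FA (u t y))) x = 0) := by
  intro t x hx
  have hslice : ContDiffOn ℝ 2 (fun y => u t y) (Ioi 0) :=
    (contDiffOn_slice_snd hu t).of_le (WithTop.coe_le_coe.mpr le_top)
  have hUt := (differentiableAt_slice_fst isOpen_Ioi (by simp) hu t hx).hasDerivAt
  have hUx := ((hslice.differentiableOn (by norm_num)).differentiableAt
    (isOpen_Ioi.mem_nhds hx)).hasDerivAt
  have hflux := (differentiableAt_comp_mul_deriv (hA.differentiable (by simp)) isOpen_Ioi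
    hslice hx).hasDerivAt
  exact ⟨conservation_law_exp_mul hx.ne' hUt hUx hflux (hpde t x hx),
    conservation_law_exp_succ_mul hx.ne' hUt hUx hflux (hpde t x hx) (hFA' _)⟩

/-- For the equation `x^{μ-1} u_t = (A(u) u_x)_x + x^μ u_x` on `(0,∞)`
(the case `B = 1`, `f = x^{μ-1}`, `h = x^μ`), both pairs
`F₁ = x^{μ-1} e^{μt} u`, `G₁ = -e^{μt}(A(u) u_x + x^μ u)` and
`F₂ = x^μ e^{(μ+1)t} u`, `G₂ = e^{(μ+1)t}(-x A(u) u_x - x^{μ+1} u + 𝔄(u))`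
(where `𝔄' = A`) are conserved vectors. -/
theorem conservation_laws_case_B_one_f_pow_h_pow
    (μ : ℝ) (A FA : ℝ → ℝ) (hA : ContDiff ℝ ∞ A)
    (hFA : ContDiff ℝ ∞ FA) (hFA' : ∀ v : ℝ, HasDerivAt FA (A v) v)
    (u : ℝ → ℝ → ℝ)
    (hu : ContDiffOn ℝ ∞ (fun p : ℝ × ℝ => u p.1 p.2) (univ ×ˢ Ioi 0))
    (hpde : ∀ t : ℝ, ∀ x ∈ Ioi (0:ℝ),
      x ^ (μ - 1) * deriv (fun s => u s x) t
        = deriv (fun y => A (u t y) * deriv (fun z => u t z) y) x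
          + x ^ μ * deriv (fun y => u t y) x) :
    ∀ t : ℝ, ∀ x ∈ Ioi (0:ℝ),
      (deriv (fun s => x ^ (μ - 1) * Real.exp (μ * s) * u s x) t
        + deriv (fun y =>
            -(Real.exp (μ * t) * (A (u t y) * deriv (fun z => u t z) y
                + y ^ μ * u t y))) x = 0)
      ∧ (deriv (fun s => x ^ μ * Real.exp ((μ + 1) * s) * u s x) t
        + deriv (fun y =>
            Real.exp ((μ + 1) * t)
              * (-(y * A (u t y) * deriv (fun z => u t z) y)
                 - y ^ (μ + 1) * u t y + FA (u t y))) x = 0) :=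
  conservation_laws_case_B_one_f_pow_h_pow_general μ A FA hA hFA' u hu hpde
end

section
/- Let μ ∈ ℝ, let A : ℝ → ℝ be smooth, let 𝔄 : ℝ → ℝ be smooth with 𝔄′ = A, and set f(x) = e^{μ/x}x^{−3}, h(x) = e^{μ/x}x^{−1} on (0,∞). Then for every smooth solution u : ℝ × (0,∞) → ℝ of the equation f(x)u_t = (A(u)u_x)_x + h(x)u_x (the case B = 1), both pairs F₁ = f(x)e^{−μt}x·u, G₁ = −e^{−μt}x(A(u)u_x + h(x)u) + e^{−μt}𝔄(u) and F₂ = f(x)e^{−μt}(tx−1)u, G₂ = −e^{−μt}(tx−1)(A(u)u_x + h(x)u) + t·e^{−μt}𝔄(u) satisfy the conservation-law identity ∂_t F + ∂_x G = 0 at every point of ℝ × (0,∞). -/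
open Set Real
open scoped ContDiff

/-!
Multiplying the equation by `λ(t,x)` and integrating by parts, a vector of the form
`F = f λ u`, `G = -λ (A(u) u_x + h u) + λ_x 𝔄(u)` has divergence
`λ · (f u_t - (A(u) u_x)_x - h u_x) + (f λ_t - h λ_x - h' λ) u` as soon as `λ_xx = 0`.
The first term vanishes on solutions, so `(F, G)` is conserved whenever `λ` solves the adjoint
equation `f λ_t - h λ_x - h' λ = 0`. For `f = e^{μ/x} x⁻³`, `h = e^{μ/x} x⁻¹` this reads
`λ_t - x² λ_x + (μ + x) λ = 0`, and its solutions affine in `x` are spanned by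
`e^{-μt} x` and `e^{-μt} (t x - 1)`.
-/

/-- The coefficient `lx` of `FA` in the flux is a constant `∂ₓλ`, i.e. `λ` is affine in `x`. -/
theorem divergence_eq_of_affine_multiplier {A FA f h : ℝ → ℝ} {u lam : ℝ → ℝ → ℝ}
    {t x lt lx h' : ℝ} (hFA : HasDerivAt FA (A (u t x)) (u t x))
    (hh : HasDerivAt h h' x) (hlt : HasDerivAt (fun s => lam s x) lt t)
    (hlx : HasDerivAt (lam t) lx x) (hut : DifferentiableAt ℝ (fun s => u s x) t)
    (hux : DifferentiableAt ℝ (u t) x)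
    (hflux : DifferentiableAt ℝ (fun y => A (u t y) * deriv (fun z => u t z) y) x) :
    deriv (fun s => f x * lam s x * u s x) t
        + deriv (fun y => -(lam t y * (A (u t y) * deriv (fun z => u t z) y + h y * u t y))
            + lx * FA (u t y)) x
      = lam t x * (f x * deriv (fun s => u s x) t
            - deriv (fun y => A (u t y) * deriv (fun z => u t z) y) x
            - h x * deriv (fun y => u t y) x)
        + (f x * lt - h x * lx - h' * lam t x) * u t x := by
  have hF : HasDerivAt (fun s => f x * lam s x * u s x) _ t :=
    (hlt.const_mul (f x)).mul hut.hasDerivAt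
  have hG : HasDerivAt
      (fun y => -(lam t y * (A (u t y) * deriv (fun z => u t z) y + h y * u t y))
        + lx * FA (u t y)) _ x :=
    (hlx.mul (hflux.hasDerivAt.add (hh.mul hux.hasDerivAt))).neg.add
      ((hFA.comp x hux.hasDerivAt).const_mul lx)
  rw [hF.deriv, hG.deriv, Pi.add_apply, Pi.mul_apply]
  ring

theorem hasDerivAt_exp_div_mul_inv (μ : ℝ) {x : ℝ} (hx : x ≠ 0) :
    HasDerivAt (fun y => exp (μ / y) * y⁻¹) (-(exp (μ / x) * (μ * x⁻¹ ^ 3 + x⁻¹ ^ 2))) x := by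
  have hdiv : HasDerivAt (fun y => μ / y) (μ * -(x ^ 2)⁻¹) x := by
    simpa only [div_eq_mul_inv] using (hasDerivAt_inv hx).const_mul μ
  refine (hdiv.exp.mul (hasDerivAt_inv hx)).congr_deriv ?_
  field_simp
  ring

theorem hasDerivAt_exp_neg_mul (μ t : ℝ) :
    HasDerivAt (fun s => exp (-μ * s)) (-μ * exp (-μ * t)) t := by
  simpa [mul_comm] using ((hasDerivAt_id t).const_mul (-μ)).exp

theorem contDiff_slice_time {u : ℝ → ℝ → ℝ}
    (hu : ContDiffOn ℝ ∞ (fun p : ℝ × ℝ => u p.1 p.2) (univ ×ˢ Ioi 0)) {x : ℝ} (hx : 0 < x) :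
    ContDiff ℝ ∞ (fun s => u s x) :=
  contDiffOn_univ.mp <| hu.comp (contDiff_id.prodMk contDiff_const).contDiffOn
    fun _ _ => ⟨mem_univ _, hx⟩

theorem contDiffOn_slice_space {u : ℝ → ℝ → ℝ}
    (hu : ContDiffOn ℝ ∞ (fun p : ℝ × ℝ => u p.1 p.2) (univ ×ˢ Ioi 0)) (t : ℝ) :
    ContDiffOn ℝ ∞ (u t) (Ioi 0) :=
  hu.comp (contDiff_const.prodMk contDiff_id).contDiffOn fun _ hy => ⟨mem_univ _, hy⟩

theorem divergence_eq_zero_of_adjoint {μ : ℝ} {A FA f h : ℝ → ℝ} (hA : ContDiff ℝ ∞ A)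
    (hFA' : ∀ v : ℝ, HasDerivAt FA (A v) v)
    (hfdef : ∀ x ∈ Ioi (0:ℝ), f x = Real.exp (μ / x) * x ^ (-3 : ℝ))
    (hhdef : ∀ x ∈ Ioi (0:ℝ), h x = Real.exp (μ / x) * x ^ (-1 : ℝ))
    {u : ℝ → ℝ → ℝ} (hu : ContDiffOn ℝ ∞ (fun p : ℝ × ℝ => u p.1 p.2) (univ ×ˢ Ioi 0))
    (hpde : ∀ t : ℝ, ∀ x ∈ Ioi (0:ℝ),
      f x * deriv (fun s => u s x) t
        = deriv (fun y => A (u t y) * deriv (fun z => u t z) y) x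
          + h x * deriv (fun y => u t y) x)
    {lam : ℝ → ℝ → ℝ} {t x lt lx : ℝ} (hx : 0 < x)
    (hlt : HasDerivAt (fun s => lam s x) lt t) (hlx : HasDerivAt (lam t) lx x)
    (hadj : lt - x ^ 2 * lx + (μ + x) * lam t x = 0) :
    deriv (fun s => f x * lam s x * u s x) t
        + deriv (fun y => -(lam t y * (A (u t y) * deriv (fun z => u t z) y + h y * u t y))
            + lx * FA (u t y)) x = 0 := by
  have hxx : Ioi (0:ℝ) ∈ nhds x := Ioi_mem_nhds hx
  have hh : HasDerivAt h (-(exp (μ / x) * (μ * x⁻¹ ^ 3 + x⁻¹ ^ 2))) x :=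
    (hasDerivAt_exp_div_mul_inv μ hx.ne').congr_of_eventuallyEq <| by
      filter_upwards [hxx] with y hy
      rw [hhdef y hy, rpow_neg_one]
  have hux : ContDiffAt ℝ ∞ (u t) x := (contDiffOn_slice_space hu t).contDiffAt hxx
  have huxx : ContDiffAt ℝ ∞ (deriv (u t)) x :=
    ((contDiffOn_slice_space hu t).deriv_of_isOpen isOpen_Ioi le_rfl).contDiffAt hxx
  have hflux : DifferentiableAt ℝ (fun y => A (u t y) * deriv (fun z => u t z) y) x :=
    (((hA.differentiable (by simp)) _).comp x (hux.differentiableAt (by simp))).mul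
      (huxx.differentiableAt (by simp))
  rw [divergence_eq_of_affine_multiplier (hFA' _) hh hlt hlx
    ((contDiff_slice_time hu hx).differentiable (by simp) t) (hux.differentiableAt (by simp)) hflux,
    sub_sub, sub_eq_zero_of_eq (hpde t x hx), mul_zero, zero_add, hfdef x hx, hhdef x hx,
    rpow_neg_one, show x ^ (-3 : ℝ) = x⁻¹ ^ 3 by simp]
  calc _ = exp (μ / x) * x⁻¹ ^ 3 * (lt - x ^ 2 * lx + (μ + x) * lam t x) * u t x := by
          field_simp
          ring
    _ = 0 := by rw [hadj, mul_zero, zero_mul]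

theorem conservation_laws_case_B_one_f_exp_inv_cube_general
    (μ : ℝ) (A FA : ℝ → ℝ) (hA : ContDiff ℝ ∞ A)
    (hFA' : ∀ v : ℝ, HasDerivAt FA (A v) v)
    (f h : ℝ → ℝ)
    (hfdef : ∀ x ∈ Ioi (0:ℝ), f x = Real.exp (μ / x) * x ^ (-3 : ℝ))
    (hhdef : ∀ x ∈ Ioi (0:ℝ), h x = Real.exp (μ / x) * x ^ (-1 : ℝ))
    (u : ℝ → ℝ → ℝ)
    (hu : ContDiffOn ℝ ∞ (fun p : ℝ × ℝ => u p.1 p.2) (univ ×ˢ Ioi 0))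
    (hpde : ∀ t : ℝ, ∀ x ∈ Ioi (0:ℝ),
      f x * deriv (fun s => u s x) t
        = deriv (fun y => A (u t y) * deriv (fun z => u t z) y) x
          + h x * deriv (fun y => u t y) x) :
    ∀ t : ℝ, ∀ x ∈ Ioi (0:ℝ),
      (deriv (fun s => f x * Real.exp (-μ * s) * x * u s x) t
        + deriv (fun y =>
            -(Real.exp (-μ * t) * y
                * (A (u t y) * deriv (fun z => u t z) y + h y * u t y))
              + Real.exp (-μ * t) * FA (u t y)) x = 0)
      ∧ (deriv (fun s => f x * Real.exp (-μ * s) * (s * x - 1) * u s x) t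
        + deriv (fun y =>
            -(Real.exp (-μ * t) * (t * y - 1)
                * (A (u t y) * deriv (fun z => u t z) y + h y * u t y))
              + t * Real.exp (-μ * t) * FA (u t y)) x = 0) := by
  intro t x hx
  have hexp := hasDerivAt_exp_neg_mul μ t
  constructor
  · have := divergence_eq_zero_of_adjoint hA hFA' hfdef hhdef hu hpde
      (lam := fun s y => exp (-μ * s) * y) hx (hexp.mul_const x)
      ((hasDerivAt_id' x).const_mul _ |>.congr_deriv (mul_one _)) (by ring)
    simpa only [mul_assoc] using this
  · have := divergence_eq_zero_of_adjoint hA hFA' hfdef hhdef hu hpde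
      (lam := fun s y => exp (-μ * s) * (s * y - 1)) hx
      (hexp.mul (((hasDerivAt_id' t).mul_const x).sub_const 1))
      ((((hasDerivAt_id' x).const_mul t).sub_const 1).const_mul _
        |>.congr_deriv (by ring : _ = t * exp (-μ * t))) (by ring)
    simpa only [mul_assoc] using this

/-- For the equation `f(x) u_t = (A(u) u_x)_x + h(x) u_x` on `(0,∞)` with
`f(x) = e^{μ/x} x^{-3}`, `h(x) = e^{μ/x} x^{-1}` (the case `B = 1`), both pairs
`F₁ = f(x) e^{-μt} x u`, `G₁ = -e^{-μt} x (A(u) u_x + h(x) u) + e^{-μt} 𝔄(u)` and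
`F₂ = f(x) e^{-μt} (tx-1) u`, `G₂ = -e^{-μt}(tx-1)(A(u) u_x + h(x) u) + t e^{-μt} 𝔄(u)`
(where `𝔄' = A`) are conserved vectors. -/
theorem conservation_laws_case_B_one_f_exp_inv_cube
    (μ : ℝ) (A FA : ℝ → ℝ) (hA : ContDiff ℝ ∞ A)
    (hFA : ContDiff ℝ ∞ FA) (hFA' : ∀ v : ℝ, HasDerivAt FA (A v) v)
    (f h : ℝ → ℝ)
    (hfdef : ∀ x ∈ Ioi (0:ℝ), f x = Real.exp (μ / x) * x ^ (-3 : ℝ))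
    (hhdef : ∀ x ∈ Ioi (0:ℝ), h x = Real.exp (μ / x) * x ^ (-1 : ℝ))
    (u : ℝ → ℝ → ℝ)
    (hu : ContDiffOn ℝ ∞ (fun p : ℝ × ℝ => u p.1 p.2) (univ ×ˢ Ioi 0))
    (hpde : ∀ t : ℝ, ∀ x ∈ Ioi (0:ℝ),
      f x * deriv (fun s => u s x) t
        = deriv (fun y => A (u t y) * deriv (fun z => u t z) y) x
          + h x * deriv (fun y => u t y) x) :
    ∀ t : ℝ, ∀ x ∈ Ioi (0:ℝ),
      (deriv (fun s => f x * Real.exp (-μ * s) * x * u s x) t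
        + deriv (fun y =>
            -(Real.exp (-μ * t) * y
                * (A (u t y) * deriv (fun z => u t z) y + h y * u t y))
              + Real.exp (-μ * t) * FA (u t y)) x = 0)
      ∧ (deriv (fun s => f x * Real.exp (-μ * s) * (s * x - 1) * u s x) t
        + deriv (fun y =>
            -(Real.exp (-μ * t) * (t * y - 1)
                * (A (u t y) * deriv (fun z => u t z) y + h y * u t y))
              + t * Real.exp (-μ * t) * FA (u t y)) x = 0) :=
  conservation_laws_case_B_one_f_exp_inv_cube_general μ A FA hA hFA' f h hfdef hhdef u hu hpde
end

section
/- Let μ ∈ ℝ, let A : ℝ → ℝ be smooth, let 𝔄 : ℝ → ℝ be smooth with 𝔄′ = A, and set f(x) = (x−1)^{μ−3/2}(x+1)^{−μ−3/2}, h(x) = (x−1)^{μ−1/2}(x+1)^{−μ−1/2} on the interval (1,∞). Then for every smooth solution u : ℝ × (1,∞) → ℝ of the equation f(x)u_t = (A(u)u_x)_x + h(x)u_x (the case B = 1), both pairs F₁ = f(x)e^{(2μ+1)t}(x−1)u, G₁ = −e^{(2μ+1)t}(x−1)(A(u)u_x + h(x)u) + e^{(2μ+1)t}𝔄(u) and F₂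 = f(x)e^{(2μ−1)t}(x+1)u, G₂ = −e^{(2μ−1)t}(x+1)(A(u)u_x + h(x)u) + e^{(2μ−1)t}𝔄(u) satisfy the conservation-law identity ∂_t F + ∂_x G = 0 at every point of ℝ × (1,∞). -/
open Set Real
open scoped ContDiff

/-!
For a weight `w` with `w' = 1`, the divergence of `F = f e^{λt} w u`,
`G = -e^{λt} w (A(u) u_x + h u) + e^{λt} 𝔄(u)` equals `e^{λt} w (f u_t - (A(u) u_x)_x - h u_x)`
plus `e^{λt} u (λ f w - h - w h')`. The first term vanishes by the equation, so `(F, G)` is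
conserved as soon as `λ f w = h + w h'`. Here `h = (x - 1)(x + 1) f` and `h' = (2μ - x) f`,
which makes this hold for `w = x - 1, λ = 2μ + 1` and for `w = x + 1, λ = 2μ - 1`.
-/

section Slices

variable {𝕜 E F G : Type*} [NontriviallyNormedField 𝕜]
  [NormedAddCommGroup E] [NormedSpace 𝕜 E] [NormedAddCommGroup F] [NormedSpace 𝕜 F]
  [NormedAddCommGroup G] [NormedSpace 𝕜 G]
  {n : WithTop ℕ∞} {u : E → F → G} {s : Set F}

theorem ContDiffOn.apply_of_uncurry
    (hu : ContDiffOn 𝕜 n (fun p : E × F => u p.1 p.2) (univ ×ˢ s)) (t : E) :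
    ContDiffOn 𝕜 n (u t) s :=
  hu.comp (contDiff_const.prodMk contDiff_id).contDiffOn fun _ hy => ⟨mem_univ _, hy⟩

theorem ContDiffOn.flip_apply_of_uncurry
    (hu : ContDiffOn 𝕜 n (fun p : E × F => u p.1 p.2) (univ ×ˢ s)) {x : F} (hx : x ∈ s) :
    ContDiff 𝕜 n (fun t => u t x) :=
  contDiffOn_univ.mp <|
    hu.comp (contDiff_id.prodMk contDiff_const).contDiffOn fun _ _ => ⟨mem_univ _, hx⟩

end Slices

theorem ContDiffOn.differentiableAt_deriv {n : WithTop ℕ∞} {g : ℝ → ℝ} {s : Set ℝ}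
    (hg : ContDiffOn ℝ n g s) (hs : IsOpen s) (hn : 2 ≤ n) {x : ℝ} (hx : x ∈ s) :
    DifferentiableAt ℝ (deriv g) x :=
  ((hg.deriv_of_isOpen hs (m := 1) (by simpa [one_add_one_eq_two] using hn)).contDiffAt
    (hs.mem_nhds hx)).differentiableAt one_ne_zero

theorem deriv_density_add_deriv_flux_eq_zero {f h A FA w : ℝ → ℝ} {u : ℝ → ℝ → ℝ}
    {t x lam h' : ℝ}
    (hut : DifferentiableAt ℝ (fun s => u s x) t)
    (hux : DifferentiableAt ℝ (fun z => u t z) x)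
    (hq : DifferentiableAt ℝ (fun y => A (u t y) * deriv (fun z => u t z) y) x)
    (hFA : HasDerivAt FA (A (u t x)) (u t x)) (hh : HasDerivAt h h' x) (hw : HasDerivAt w 1 x)
    (hpde : f x * deriv (fun s => u s x) t
      = deriv (fun y => A (u t y) * deriv (fun z => u t z) y) x
        + h x * deriv (fun y => u t y) x)
    (hweight : lam * f x * w x = h x + w x * h') :
    deriv (fun s => f x * Real.exp (lam * s) * w x * u s x) t
      + deriv (fun y =>
          -(Real.exp (lam * t) * w y
              * (A (u t y) * deriv (fun z => u t z) y + h y * u t y))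
            + Real.exp (lam * t) * FA (u t y)) x = 0 := by
  have hexp : HasDerivAt (fun s => Real.exp (lam * s)) (Real.exp (lam * t) * lam) t := by
    simpa using ((hasDerivAt_id t).const_mul lam).exp
  have hF : HasDerivAt (fun s => f x * Real.exp (lam * s) * w x * u s x) _ t :=
    ((hexp.const_mul (f x)).mul_const (w x)).mul hut.hasDerivAt
  have hG : HasDerivAt (fun y =>
      -(Real.exp (lam * t) * w y * (A (u t y) * deriv (fun z => u t z) y + h y * u t y))
        + Real.exp (lam * t) * FA (u t y)) _ x :=
    ((hw.const_mul (Real.exp (lam * t))).mul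
      (hq.hasDerivAt.add (hh.mul hux.hasDerivAt))).neg.add
        ((hFA.comp x hux.hasDerivAt).const_mul (Real.exp (lam * t)))
  rw [hF.deriv, hG.deriv, Pi.add_apply, Pi.mul_apply]
  linear_combination Real.exp (lam * t) * w x * hpde + Real.exp (lam * t) * u t x * hweight

section Coefficients

variable {μ x : ℝ}

theorem rpow_mul_rpow_shift_eq (hx : 1 < x) :
    (x - 1) ^ (μ - 1/2) * (x + 1) ^ (-μ - 1/2)
      = (x - 1) ^ (μ - 3/2) * (x + 1) ^ (-μ - 3/2) * ((x - 1) * (x + 1)) := by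
  rw [show μ - 1/2 = (μ - 3/2) + 1 by ring, show -μ - 1/2 = (-μ - 3/2) + 1 by ring,
    rpow_add_one (by linarith), rpow_add_one (by linarith)]
  ring

theorem hasDerivAt_rpow_mul_rpow_shift (hx : 1 < x) :
    HasDerivAt (fun y : ℝ => (y - 1) ^ (μ - 1/2) * (y + 1) ^ (-μ - 1/2))
      ((x - 1) ^ (μ - 3/2) * (x + 1) ^ (-μ - 3/2) * (2 * μ - x)) x := by
  have hm : HasDerivAt (fun y : ℝ => (y - 1) ^ (μ - 1/2) * (y + 1) ^ (-μ - 1/2)) _ x :=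
    (((hasDerivAt_id' x).sub_const 1).rpow_const (Or.inl (by linarith))).mul
      (((hasDerivAt_id' x).add_const 1).rpow_const (Or.inl (by linarith)))
  refine hm.congr_deriv ?_
  rw [show μ - 1/2 - 1 = μ - 3/2 by ring, show -μ - 1/2 - 1 = -μ - 3/2 by ring,
    show μ - 1/2 = (μ - 3/2) + 1 by ring, show -μ - 1/2 = (-μ - 3/2) + 1 by ring,
    rpow_add_one (by linarith), rpow_add_one (by linarith)]
  ring

end Coefficients

theorem conservation_laws_case_B_one_f_powers_xm1_xp1_general
    (μ : ℝ) (A FA : ℝ → ℝ) (hA : ContDiff ℝ ∞ A)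
    (hFA' : ∀ v : ℝ, HasDerivAt FA (A v) v)
    (f h : ℝ → ℝ)
    (hfdef : ∀ x ∈ Ioi (1:ℝ), f x = (x - 1) ^ (μ - 3/2) * (x + 1) ^ (-μ - 3/2))
    (hhdef : ∀ x ∈ Ioi (1:ℝ), h x = (x - 1) ^ (μ - 1/2) * (x + 1) ^ (-μ - 1/2))
    (u : ℝ → ℝ → ℝ)
    (hu : ContDiffOn ℝ ∞ (fun p : ℝ × ℝ => u p.1 p.2) (univ ×ˢ Ioi 1))
    (hpde : ∀ t : ℝ, ∀ x ∈ Ioi (1:ℝ),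
      f x * deriv (fun s => u s x) t
        = deriv (fun y => A (u t y) * deriv (fun z => u t z) y) x
          + h x * deriv (fun y => u t y) x) :
    ∀ t : ℝ, ∀ x ∈ Ioi (1:ℝ),
      (deriv (fun s => f x * Real.exp ((2*μ + 1) * s) * (x - 1) * u s x) t
        + deriv (fun y =>
            -(Real.exp ((2*μ + 1) * t) * (y - 1)
                * (A (u t y) * deriv (fun z => u t z) y + h y * u t y))
              + Real.exp ((2*μ + 1) * t) * FA (u t y)) x = 0)
      ∧ (deriv (fun s => f x * Real.exp ((2*μ - 1) * s) * (x + 1) * u s x) t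
        + deriv (fun y =>
            -(Real.exp ((2*μ - 1) * t) * (y + 1)
                * (A (u t y) * deriv (fun z => u t z) y + h y * u t y))
              + Real.exp ((2*μ - 1) * t) * FA (u t y)) x = 0) := by
  intro t x hx
  have hslice := hu.apply_of_uncurry t
  have hux : DifferentiableAt ℝ (fun z => u t z) x :=
    (hslice.contDiffAt (isOpen_Ioi.mem_nhds hx)).differentiableAt (by norm_num)
  have hq : DifferentiableAt ℝ (fun y => A (u t y) * deriv (fun z => u t z) y) x :=
    ((hA.differentiable (by norm_num) _).comp x hux).mul
      (hslice.differentiableAt_deriv isOpen_Ioi (by norm_cast) hx)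
  have hut : DifferentiableAt ℝ (fun s => u s x) t :=
    ((hu.flip_apply_of_uncurry hx).differentiable (by norm_num)) t
  have hhx : h x = f x * ((x - 1) * (x + 1)) := by
    rw [hhdef x hx, hfdef x hx, rpow_mul_rpow_shift_eq hx]
  have hh : HasDerivAt h (f x * (2 * μ - x)) x := by
    rw [hfdef x hx]
    exact (hasDerivAt_rpow_mul_rpow_shift hx).congr_of_eventuallyEq
      (Filter.eventuallyEq_of_mem (isOpen_Ioi.mem_nhds hx) hhdef)
  exact ⟨deriv_density_add_deriv_flux_eq_zero (w := fun y => y - 1) hut hux hq (hFA' _) hh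
      ((hasDerivAt_id x).sub_const 1) (hpde t x hx) (by rw [hhx]; ring),
    deriv_density_add_deriv_flux_eq_zero (w := fun y => y + 1) hut hux hq (hFA' _) hh
      ((hasDerivAt_id x).add_const 1) (hpde t x hx) (by rw [hhx]; ring)⟩

/-- For the equation `f(x) u_t = (A(u) u_x)_x + h(x) u_x` on `(1,∞)` with
`f(x) = (x-1)^{μ-3/2} (x+1)^{-μ-3/2}`, `h(x) = (x-1)^{μ-1/2} (x+1)^{-μ-1/2}` (the case
`B = 1`), both pairs
`F₁ = f(x) e^{(2μ+1)t} (x-1) u`, `G₁ = -e^{(2μ+1)t}(x-1)(A(u) u_x + h(x) u) + e^{(2μ+1)t} 𝔄(u)`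
and
`F₂ = f(x) e^{(2μ-1)t} (x+1) u`, `G₂ = -e^{(2μ-1)t}(x+1)(A(u) u_x + h(x) u) + e^{(2μ-1)t} 𝔄(u)`
(where `𝔄' = A`) are conserved vectors. -/
theorem conservation_laws_case_B_one_f_powers_xm1_xp1
    (μ : ℝ) (A FA : ℝ → ℝ) (hA : ContDiff ℝ ∞ A)
    (hFA : ContDiff ℝ ∞ FA) (hFA' : ∀ v : ℝ, HasDerivAt FA (A v) v)
    (f h : ℝ → ℝ)
    (hfdef : ∀ x ∈ Ioi (1:ℝ), f x = (x - 1) ^ (μ - 3/2) * (x + 1) ^ (-μ - 3/2))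
    (hhdef : ∀ x ∈ Ioi (1:ℝ), h x = (x - 1) ^ (μ - 1/2) * (x + 1) ^ (-μ - 1/2))
    (u : ℝ → ℝ → ℝ)
    (hu : ContDiffOn ℝ ∞ (fun p : ℝ × ℝ => u p.1 p.2) (univ ×ˢ Ioi 1))
    (hpde : ∀ t : ℝ, ∀ x ∈ Ioi (1:ℝ),
      f x * deriv (fun s => u s x) t
        = deriv (fun y => A (u t y) * deriv (fun z => u t z) y) x
          + h x * deriv (fun y => u t y) x) :
    ∀ t : ℝ, ∀ x ∈ Ioi (1:ℝ),
      (deriv (fun s => f x * Real.exp ((2*μ + 1) * s) * (x - 1) * u s x) t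
        + deriv (fun y =>
            -(Real.exp ((2*μ + 1) * t) * (y - 1)
                * (A (u t y) * deriv (fun z => u t z) y + h y * u t y))
              + Real.exp ((2*μ + 1) * t) * FA (u t y)) x = 0)
      ∧ (deriv (fun s => f x * Real.exp ((2*μ - 1) * s) * (x + 1) * u s x) t
        + deriv (fun y =>
            -(Real.exp ((2*μ - 1) * t) * (y + 1)
                * (A (u t y) * deriv (fun z => u t z) y + h y * u t y))
              + Real.exp ((2*μ - 1) * t) * FA (u t y)) x = 0) :=
  conservation_laws_case_B_one_f_powers_xm1_xp1_general μ A FA hA hFA' f h hfdef hhdef u hu hpde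
end

section
/- Let μ ∈ ℝ, let A : ℝ → ℝ be smooth, let 𝔄 : ℝ → ℝ be smooth with 𝔄′ = A, and set f(x) = e^{μ·arctan x}(x²+1)^{−3/2}, h(x) = e^{μ·arctan x}(x²+1)^{−1/2} on ℝ. Then for every smooth solution u : ℝ × ℝ → ℝ of the equation f(x)u_t = (A(u)u_x)_x + h(x)u_x (the case B = 1), both pairs F₁ = f(x)e^{μt}(x·cos t + sin t)u, G₁ = −e^{μt}(x·cos t + sin t)(A(u)u_x + h(x)u) + e^{μt}cos t·𝔄(u) and F₂ = f(x)e^{μt}(x·sin t − cos t)u, G₂ = −e^{μt}(x·sin t − cos t)(A(u)u_x + h(x)u) + e^{μt}sin t·𝔄(u) satisfy the conservation-law identity ∂_t F + ∂_x G = 0 at every point of ℝ × ℝ. -/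
/-!
Write `w(t,x) = e^{μt}(x p(t) + q(t))` with `p' = -q`, `q' = p`, i.e. `(p, q) = (cos, sin)` or
`(sin, -cos)`. The pair is `F = f w u`, `G = -w (A(u) u_x + h u) + w_x 𝔄(u)`, and since `w_x`
does not depend on `x`, `D_t F + D_x G = w (f u_t - (A(u) u_x)_x - h u_x) + u (f w_t - (h w)_x)`.
The first term vanishes on solutions; the second vanishes because `w` solves the adjoint
equation `f w_t = (h w)_x`, which reduces to an identity once `h = (x² + 1) f` and
`h' = (μ - x) f`.
-/

open Real
open scoped ContDiff

section Divergence

variable {f h A FA : ℝ → ℝ} {u w : ℝ → ℝ → ℝ} {t x wt c : ℝ}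

theorem divergence_eq_adjoint_add_equation
    (hut : DifferentiableAt ℝ (fun s => u s x) t)
    (hux : DifferentiableAt ℝ (fun y => u t y) x)
    (huxx : DifferentiableAt ℝ (deriv fun y => u t y) x)
    (hA : DifferentiableAt ℝ A (u t x)) (hFA : HasDerivAt FA (A (u t x)) (u t x))
    (hh : DifferentiableAt ℝ h x)
    (hwt : HasDerivAt (fun s => w s x) wt t) (hwx : HasDerivAt (fun y => w t y) c x) :
    deriv (fun s => f x * w s x * u s x) t
      + deriv (fun y => -(w t y * (A (u t y) * deriv (fun z => u t z) y + h y * u t y))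
          + c * FA (u t y)) x
    = u t x * (f x * wt - (deriv h x * w t x + h x * c))
      + w t x * (f x * deriv (fun s => u s x) t
          - deriv (fun y => A (u t y) * deriv (fun z => u t z) y) x
          - h x * deriv (fun y => u t y) x) := by
  have hF := (hwt.const_mul (f x)).fun_mul hut.hasDerivAt
  have hflux : DifferentiableAt ℝ (fun y => A (u t y) * deriv (fun z => u t z) y) x :=
    (hA.comp x hux).mul huxx
  have hFAu : HasDerivAt (fun y => FA (u t y)) (A (u t x) * deriv (fun y => u t y) x) x :=
    hFA.comp x hux.hasDerivAt
  have hG := (hwx.fun_mul (hflux.hasDerivAt.fun_add (hh.hasDerivAt.fun_mul hux.hasDerivAt))).fun_neg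
    |>.fun_add (hFAu.const_mul c)
  rw [hF.deriv, hG.deriv]
  ring

end Divergence

theorem hasDerivAt_exp_mul_arctan_mul_rpow (μ x : ℝ) :
    HasDerivAt (fun y => exp (μ * arctan y) * (y ^ 2 + 1) ^ (-(1:ℝ)/2))
      (exp (μ * arctan x) * (x ^ 2 + 1) ^ (-(3:ℝ)/2) * (μ - x)) x := by
  have hpos : 0 < x ^ 2 + 1 := by positivity
  have hexp := ((hasDerivAt_arctan x).const_mul μ).exp
  have hpow := ((hasDerivAt_pow 2 x).add_const 1).rpow_const (p := -(1:ℝ)/2) (Or.inl hpos.ne')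
  refine (hexp.mul hpow).congr_deriv ?_
  rw [show -(1:ℝ)/2 - 1 = -(3:ℝ)/2 by norm_num,
    show -(1:ℝ)/2 = -(3:ℝ)/2 + 1 by norm_num, rpow_add_one hpos.ne']
  field_simp
  ring

theorem conservation_law_of_rotating_pair {μ : ℝ} {A FA f h p q : ℝ → ℝ} {u : ℝ → ℝ → ℝ}
    (hA : Differentiable ℝ A) (hFA : ∀ v, HasDerivAt FA (A v) v)
    (hfdef : ∀ x : ℝ, f x = exp (μ * arctan x) * (x ^ 2 + 1) ^ (-(3:ℝ)/2))
    (hhdef : ∀ x : ℝ, h x = exp (μ * arctan x) * (x ^ 2 + 1) ^ (-(1:ℝ)/2))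
    (hu : ContDiff ℝ 2 (fun p : ℝ × ℝ => u p.1 p.2))
    {t x : ℝ}
    (hpde : f x * deriv (fun s => u s x) t
        = deriv (fun y => A (u t y) * deriv (fun z => u t z) y) x
          + h x * deriv (fun y => u t y) x)
    (hp : HasDerivAt p (-q t) t) (hq : HasDerivAt q (p t) t) :
    deriv (fun s => f x * exp (μ * s) * (x * p s + q s) * u s x) t
      + deriv (fun y =>
          -(exp (μ * t) * (y * p t + q t) * (A (u t y) * deriv (fun z => u t z) y + h y * u t y))
            + exp (μ * t) * p t * FA (u t y)) x = 0 := by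
  have hh : HasDerivAt h (f x * (μ - x)) x := by
    rw [funext hhdef, hfdef]
    exact hasDerivAt_exp_mul_arctan_mul_rpow μ x
  have hhf : h x = f x * (x ^ 2 + 1) := by
    rw [hhdef, hfdef, show -(1:ℝ)/2 = -(3:ℝ)/2 + 1 by norm_num, rpow_add_one (by positivity),
      mul_assoc]
  have hut : DifferentiableAt ℝ (fun s => u s x) t :=
    (hu.comp (contDiff_prodMk_left x)).differentiable two_ne_zero t
  have hux : ContDiff ℝ 2 (fun y => u t y) := hu.comp (contDiff_prodMk_right t)
  have hwt : HasDerivAt (fun s => exp (μ * s) * (x * p s + q s))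
      (exp (μ * t) * μ * (x * p t + q t) + exp (μ * t) * (x * -q t + p t)) t :=
    (((hasDerivAt_id' t).const_mul μ).exp.fun_mul ((hp.const_mul x).fun_add hq)).congr_deriv
      (by ring)
  have hwx : HasDerivAt (fun y => exp (μ * t) * (y * p t + q t)) (exp (μ * t) * p t) x :=
    (((hasDerivAt_id' x).mul_const (p t)).add_const (q t)).const_mul (exp (μ * t)) |>.congr_deriv
      (by ring)
  simp_rw [mul_assoc (f x) (exp _)]
  rw [divergence_eq_adjoint_add_equation (f := f) (w := fun s y => exp (μ * s) * (y * p s + q s))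
      hut (hux.differentiable two_ne_zero x) ((hux.deriv' (n := 1)).differentiable one_ne_zero x)
      (hA _) (hFA _) hh.differentiableAt hwt hwx, hh.deriv, hpde, hhf]
  ring

theorem conservation_laws_case_B_one_f_arctan_general
    (μ : ℝ) (A FA : ℝ → ℝ) (hA : ContDiff ℝ ∞ A)
    (hFA' : ∀ v : ℝ, HasDerivAt FA (A v) v)
    (f h : ℝ → ℝ)
    (hfdef : ∀ x : ℝ, f x = Real.exp (μ * Real.arctan x) * (x^2 + 1) ^ (-(3:ℝ)/2))
    (hhdef : ∀ x : ℝ, h x = Real.exp (μ * Real.arctan x) * (x^2 + 1) ^ (-(1:ℝ)/2))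
    (u : ℝ → ℝ → ℝ)
    (hu : ContDiff ℝ ∞ (fun p : ℝ × ℝ => u p.1 p.2))
    (hpde : ∀ t x : ℝ,
      f x * deriv (fun s => u s x) t
        = deriv (fun y => A (u t y) * deriv (fun z => u t z) y) x
          + h x * deriv (fun y => u t y) x) :
    ∀ t x : ℝ,
      (deriv (fun s => f x * Real.exp (μ * s) * (x * Real.cos s + Real.sin s) * u s x) t
        + deriv (fun y =>
            -(Real.exp (μ * t) * (y * Real.cos t + Real.sin t)
                * (A (u t y) * deriv (fun z => u t z) y + h y * u t y))
              + Real.exp (μ * t) * Real.cos t * FA (u t y)) x = 0)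
      ∧ (deriv (fun s => f x * Real.exp (μ * s) * (x * Real.sin s - Real.cos s) * u s x) t
        + deriv (fun y =>
            -(Real.exp (μ * t) * (y * Real.sin t - Real.cos t)
                * (A (u t y) * deriv (fun z => u t z) y + h y * u t y))
              + Real.exp (μ * t) * Real.sin t * FA (u t y)) x = 0) := by
  intro t x
  have hu2 : ContDiff ℝ 2 (fun p : ℝ × ℝ => u p.1 p.2) := hu.of_le (by norm_cast)
  have hA' : Differentiable ℝ A := hA.differentiable (by simp)
  refine ⟨conservation_law_of_rotating_pair hA' hFA' hfdef hhdef hu2 (hpde t x)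
    (hasDerivAt_cos t) (hasDerivAt_sin t), ?_⟩
  simpa only [sub_eq_add_neg] using conservation_law_of_rotating_pair (q := fun s => -cos s)
    hA' hFA' hfdef hhdef hu2 (hpde t x) ((hasDerivAt_sin t).congr_deriv (neg_neg _).symm)
    ((hasDerivAt_cos t).fun_neg.congr_deriv (neg_neg _))

/-- For the equation `f(x) u_t = (A(u) u_x)_x + h(x) u_x` on `ℝ` with
`f(x) = e^{μ arctan x} (x²+1)^{-3/2}`, `h(x) = e^{μ arctan x} (x²+1)^{-1/2}` (the case
`B = 1`), both pairs
`F₁ = f(x) e^{μt} (x cos t + sin t) u`,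
`G₁ = -e^{μt}(x cos t + sin t)(A(u) u_x + h(x) u) + e^{μt} cos t · 𝔄(u)` and
`F₂ = f(x) e^{μt} (x sin t - cos t) u`,
`G₂ = -e^{μt}(x sin t - cos t)(A(u) u_x + h(x) u) + e^{μt} sin t · 𝔄(u)`
(where `𝔄' = A`) are conserved vectors. -/
theorem conservation_laws_case_B_one_f_arctan
    (μ : ℝ) (A FA : ℝ → ℝ) (hA : ContDiff ℝ ∞ A)
    (hFA : ContDiff ℝ ∞ FA) (hFA' : ∀ v : ℝ, HasDerivAt FA (A v) v)
    (f h : ℝ → ℝ)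
    (hfdef : ∀ x : ℝ, f x = Real.exp (μ * Real.arctan x) * (x^2 + 1) ^ (-(3:ℝ)/2))
    (hhdef : ∀ x : ℝ, h x = Real.exp (μ * Real.arctan x) * (x^2 + 1) ^ (-(1:ℝ)/2))
    (u : ℝ → ℝ → ℝ)
    (hu : ContDiff ℝ ∞ (fun p : ℝ × ℝ => u p.1 p.2))
    (hpde : ∀ t x : ℝ,
      f x * deriv (fun s => u s x) t
        = deriv (fun y => A (u t y) * deriv (fun z => u t z) y) x
          + h x * deriv (fun y => u t y) x) :
    ∀ t x : ℝ,
      (deriv (fun s => f x * Real.exp (μ * s) * (x * Real.cos s + Real.sin s) * u s x) t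
        + deriv (fun y =>
            -(Real.exp (μ * t) * (y * Real.cos t + Real.sin t)
                * (A (u t y) * deriv (fun z => u t z) y + h y * u t y))
              + Real.exp (μ * t) * Real.cos t * FA (u t y)) x = 0)
      ∧ (deriv (fun s => f x * Real.exp (μ * s) * (x * Real.sin s - Real.cos s) * u s x) t
        + deriv (fun y =>
            -(Real.exp (μ * t) * (y * Real.sin t - Real.cos t)
                * (A (u t y) * deriv (fun z => u t z) y + h y * u t y))
              + Real.exp (μ * t) * Real.sin t * FA (u t y)) x = 0) :=
  conservation_laws_case_B_one_f_arctan_general μ A FA hA hFA' f h hfdef hhdef u hu hpde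
end

section
/- Let I ⊆ ℝ be an open interval, let h : I → ℝ be smooth with h′ nowhere zero, and let A : ℝ → ℝ be smooth. Then for every smooth solution u : ℝ × I → ℝ of the equation h′(x)u_t = (A(u)u_x)_x + h(x)u_x (the case B = 1, f = h_x), the pair F = e^t h′(x)u, G = −e^t(A(u)u_x + h(x)u) satisfies the conservation-law identity ∂_t F + ∂_x G = 0 at every point of ℝ × I. -/
open Set Real
open scoped ContDiff

/-! Differentiating `F = eᵗ h'(x) u` in `t` and `G = -eᵗ (A(u) u_x + h u)` in `x` gives
`∂_t F + ∂_x G = eᵗ (h' u_t - (A(u) u_x)_x - h u_x)`: the terms `± eᵗ h' u` cancel, and what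
remains is `eᵗ` times the residual of the equation. -/

section Sections

variable {n : WithTop ℕ∞} {Φ : ℝ → ℝ → ℝ} {T S : Set ℝ}

theorem ContDiffOn.section_snd (hΦ : ContDiffOn ℝ n (fun p : ℝ × ℝ => Φ p.1 p.2) (T ×ˢ S))
    {t : ℝ} (ht : t ∈ T) : ContDiffOn ℝ n (Φ t) S :=
  hΦ.comp (contDiffOn_const.prodMk contDiffOn_id) fun _ hy => ⟨ht, hy⟩

theorem ContDiffOn.section_fst (hΦ : ContDiffOn ℝ n (fun p : ℝ × ℝ => Φ p.1 p.2) (T ×ˢ S))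
    {x : ℝ} (hx : x ∈ S) : ContDiffOn ℝ n (fun s => Φ s x) T :=
  hΦ.comp (contDiffOn_id.prodMk contDiffOn_const) fun _ hs => ⟨hs, hx⟩

end Sections

theorem deriv_exp_mul_const_mul {v : ℝ → ℝ} {t : ℝ} (c : ℝ) (hv : DifferentiableAt ℝ v t) :
    deriv (fun s => exp s * c * v s) t = exp t * c * (v t + deriv v t) := by
  have hF : HasDerivAt (fun s => exp s * c * v s) (exp t * c * v t + exp t * c * deriv v t) t :=
    ((hasDerivAt_exp t).mul_const c).mul hv.hasDerivAt
  rw [hF.deriv]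
  ring

theorem deriv_neg_const_mul_add_mul {w g φ : ℝ → ℝ} {x : ℝ} (a : ℝ)
    (hw : DifferentiableAt ℝ w x) (hg : DifferentiableAt ℝ g x) (hφ : DifferentiableAt ℝ φ x) :
    deriv (fun y => -(a * (w y + g y * φ y))) x
      = -(a * (deriv w x + (deriv g x * φ x + g x * deriv φ x))) :=
  ((hw.hasDerivAt.add (hg.hasDerivAt.mul hφ.hasDerivAt)).const_mul a).neg.deriv

theorem conservation_law_case_B_one_f_hx_general
    (I : Set ℝ) (hIopen : IsOpen I)
    (h : ℝ → ℝ) (hh : ContDiffOn ℝ ∞ h I)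
    (A : ℝ → ℝ) (hA : ContDiff ℝ ∞ A)
    (u : ℝ → ℝ → ℝ)
    (hu : ContDiffOn ℝ ∞ (fun p : ℝ × ℝ => u p.1 p.2) (univ ×ˢ I))
    (hpde : ∀ t : ℝ, ∀ x ∈ I,
      deriv h x * deriv (fun s => u s x) t
        = deriv (fun y => A (u t y) * deriv (fun z => u t z) y) x
          + h x * deriv (fun y => u t y) x) :
    ∀ t : ℝ, ∀ x ∈ I,
      deriv (fun s => Real.exp s * deriv h x * u s x) t
        + deriv (fun y =>
            -(Real.exp t * (A (u t y) * deriv (fun z => u t z) y + h y * u t y))) x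
        = 0 := by
  intro t x hx
  have hxI : I ∈ nhds x := hIopen.mem_nhds hx
  have hut : ContDiff ℝ ∞ (fun s => u s x) := contDiffOn_univ.mp (hu.section_fst hx)
  have hux : ContDiffOn ℝ ∞ (u t) I := hu.section_snd (mem_univ t)
  have hux_x : DifferentiableAt ℝ (u t) x := (hux.contDiffAt hxI).differentiableAt (by simp)
  have huxx : ContDiffOn ℝ ∞ (deriv (u t)) I := hux.deriv_of_isOpen hIopen le_rfl
  have hflux : DifferentiableAt ℝ (fun y => A (u t y) * deriv (u t) y) x :=
    ((hA.differentiable (by simp) _).comp x hux_x).mul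
      ((huxx.contDiffAt hxI).differentiableAt (by simp))
  rw [deriv_exp_mul_const_mul _ (hut.differentiable (by simp) t),
    deriv_neg_const_mul_add_mul _ hflux ((hh.contDiffAt hxI).differentiableAt (by simp)) hux_x]
  linear_combination exp t * hpde t x hx

/-- For the equation `h'(x) u_t = (A(u) u_x)_x + h(x) u_x` (the case
`B = 1`, `f = h_x`), the pair `F = e^t h'(x) u`, `G = -e^t (A(u) u_x + h(x) u)` is a
conserved vector. -/
theorem conservation_law_case_B_one_f_hx
    (I : Set ℝ) (hIopen : IsOpen I) (hIconn : Convex ℝ I)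
    (h : ℝ → ℝ) (hh : ContDiffOn ℝ ∞ h I) (hh0 : ∀ x ∈ I, deriv h x ≠ 0)
    (A : ℝ → ℝ) (hA : ContDiff ℝ ∞ A)
    (u : ℝ → ℝ → ℝ)
    (hu : ContDiffOn ℝ ∞ (fun p : ℝ × ℝ => u p.1 p.2) (univ ×ˢ I))
    (hpde : ∀ t : ℝ, ∀ x ∈ I,
      deriv h x * deriv (fun s => u s x) t
        = deriv (fun y => A (u t y) * deriv (fun z => u t z) y) x
          + h x * deriv (fun y => u t y) x) :
    ∀ t : ℝ, ∀ x ∈ I,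
      deriv (fun s => Real.exp s * deriv h x * u s x) t
        + deriv (fun y =>
            -(Real.exp t * (A (u t y) * deriv (fun z => u t z) y + h y * u t y))) x
        = 0 :=
  conservation_law_case_B_one_f_hx_general I hIopen h hh A hA u hu hpde
end

section
/- Let I ⊆ (0,∞) be an open interval, let h : I → ℝ be smooth such that f(x) := h′(x) + h(x)/x is nowhere zero on I, let A : ℝ → ℝ be smooth, and let 𝔄 : ℝ → ℝ be smooth with 𝔄′ = A. Then for every smooth solution u : ℝ × I → ℝ of the equation f(x)u_t = (A(u)u_x)_x + h(x)u_x (the case B = 1, f = h_x + h·x^{−1}), the pair F = e^t x f(x)u, G = −e^t(x·A(u)u_x + x·h(x)u − 𝔄(u)) satisfies the conservation-law identity ∂_t F + ∂_x G = 0 at every point of ℝ × I. -/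
/-!
Differentiating, `∂ₜF = eᵗ x f (u + uₜ)` and `∂ₓG = -eᵗ (x (A(u) uₓ)ₓ + (h + x h') u + x h uₓ)`:
the terms `A(u) uₓ` from `(x A(u) uₓ)ₓ` and from `𝔄(u)ₓ` cancel because `𝔄' = A`. Hence
`∂ₜF + ∂ₓG = eᵗ x (f uₜ - (A(u) uₓ)ₓ - h uₓ) + eᵗ u (x f - h - x h')`; the first bracket vanishes by
the equation, the second because `x f = x h' + h`.
-/

open Set Real
open scoped ContDiff

section Uncurry

variable {𝕜 E F G : Type*} [NontriviallyNormedField 𝕜] [NormedAddCommGroup E] [NormedSpace 𝕜 E]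
  [NormedAddCommGroup F] [NormedSpace 𝕜 F] [NormedAddCommGroup G] [NormedSpace 𝕜 G]
  {n : WithTop ℕ∞} {u : E → F → G} {s : Set E} {t : Set F}

theorem ContDiffOn.uncurry_left {a : E} (ha : a ∈ s)
    (hu : ContDiffOn 𝕜 n (Function.uncurry u) (s ×ˢ t)) : ContDiffOn 𝕜 n (u a) t :=
  hu.comp (contDiff_prodMk_right a).contDiffOn fun _ hy => ⟨ha, hy⟩

theorem ContDiffOn.uncurry_right {b : F} (hb : b ∈ t)
    (hu : ContDiffOn 𝕜 n (Function.uncurry u) (s ×ˢ t)) : ContDiffOn 𝕜 n (fun a => u a b) s :=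
  hu.comp (contDiff_prodMk_left b).contDiffOn fun _ hx => ⟨hx, hb⟩

end Uncurry

theorem hasDerivAt_flux {A FA h v w : ℝ → ℝ} {x W h' : ℝ}
    (hW : HasDerivAt (fun y => A (v y) * w y) W x) (hh : HasDerivAt h h' x)
    (hv : HasDerivAt v (w x) x) (hFA : HasDerivAt FA (A (v x)) (v x)) :
    HasDerivAt (fun y => y * A (v y) * w y + y * h y * v y - FA (v y))
      (x * W + (h x + x * h') * v x + x * h x * w x) x := by
  have hflux : HasDerivAt (fun y => y * A (v y) * w y) (1 * (A (v x) * w x) + x * W) x := by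
    simpa only [mul_assoc] using (hasDerivAt_id' x).fun_mul hW
  have hlin : HasDerivAt (fun y => y * h y * v y) ((1 * h x + x * h') * v x + x * h x * w x) x :=
    ((hasDerivAt_id' x).fun_mul hh).fun_mul hv
  have hpot : HasDerivAt (fun y => FA (v y)) (A (v x) * w x) x := hFA.comp x hv
  exact ((hflux.fun_add hlin).fun_sub hpot).congr_deriv (by ring)

theorem conservation_law_case_B_one_f_hx_plus_h_over_x_general
    (I : Set ℝ) (hIopen : IsOpen I) (hIpos : I ⊆ Ioi (0:ℝ))
    (h f : ℝ → ℝ) (hh : ContDiffOn ℝ ∞ h I)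
    (hfdef : ∀ x ∈ I, f x = deriv h x + h x / x)
    (A FA : ℝ → ℝ) (hA : ContDiff ℝ ∞ A)
    (hFA' : ∀ v : ℝ, HasDerivAt FA (A v) v)
    (u : ℝ → ℝ → ℝ)
    (hu : ContDiffOn ℝ ∞ (fun p : ℝ × ℝ => u p.1 p.2) (univ ×ˢ I))
    (hpde : ∀ t : ℝ, ∀ x ∈ I,
      f x * deriv (fun s => u s x) t
        = deriv (fun y => A (u t y) * deriv (fun z => u t z) y) x
          + h x * deriv (fun y => u t y) x) :
    ∀ t : ℝ, ∀ x ∈ I,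
      deriv (fun s => Real.exp s * x * f x * u s x) t
        + deriv (fun y =>
            -(Real.exp t * (y * A (u t y) * deriv (fun z => u t z) y
                + y * h y * u t y - FA (u t y)))) x = 0 := by
  intro t x hx
  have hxI : I ∈ nhds x := hIopen.mem_nhds hx
  have hut : DifferentiableAt ℝ (fun s => u s x) t :=
    (contDiffOn_univ.mp (hu.uncurry_right hx)).differentiable (by simp) t
  have hux : ContDiffOn ℝ ∞ (u t) I := hu.uncurry_left (mem_univ t)
  have hv : HasDerivAt (u t) (deriv (u t) x) x :=
    ((hux.contDiffAt hxI).differentiableAt (by simp)).hasDerivAt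
  have hW : DifferentiableAt ℝ (fun y => A (u t y) * deriv (u t) y) x :=
    ((hA.differentiable (by simp)).differentiableAt.comp x hv.differentiableAt).mul
      (((hux.deriv_of_isOpen hIopen (m := ∞) le_rfl).contDiffAt hxI).differentiableAt (by simp))
  have hhx : HasDerivAt h (deriv h x) x :=
    ((hh.contDiffAt hxI).differentiableAt (by simp)).hasDerivAt
  have hF : HasDerivAt (fun s => exp s * x * f x * u s x) _ t :=
    (((hasDerivAt_exp t).mul_const x).mul_const (f x)).mul hut.hasDerivAt
  have hG : HasDerivAt (fun y => -(exp t * (y * A (u t y) * deriv (u t) y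
      + y * h y * u t y - FA (u t y)))) _ x :=
    ((hasDerivAt_flux hW.hasDerivAt hhx hv (hFA' _)).const_mul (exp t)).neg
  have hxf : x * f x = x * deriv h x + h x := by
    rw [hfdef x hx]
    field_simp [(mem_Ioi.mp (hIpos hx)).ne']
  rw [hF.deriv, hG.deriv]
  linear_combination exp t * x * hpde t x hx + exp t * u t x * hxf

/-- For the equation `f(x) u_t = (A(u) u_x)_x + h(x) u_x` with
`f = h_x + h/x` nowhere zero on `I ⊆ (0,∞)` (the case `B = 1`, `f = h_x + h x⁻¹`),
the pair `F = e^t x f(x) u`, `G = -e^t (x A(u) u_x + x h(x) u - 𝔄(u))` (where `𝔄' = A`)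
is a conserved vector. -/
theorem conservation_law_case_B_one_f_hx_plus_h_over_x
    (I : Set ℝ) (hIopen : IsOpen I) (hIconn : Convex ℝ I) (hIpos : I ⊆ Ioi (0:ℝ))
    (h f : ℝ → ℝ) (hh : ContDiffOn ℝ ∞ h I)
    (hfdef : ∀ x ∈ I, f x = deriv h x + h x / x)
    (hf0 : ∀ x ∈ I, f x ≠ 0)
    (A FA : ℝ → ℝ) (hA : ContDiff ℝ ∞ A)
    (hFA : ContDiff ℝ ∞ FA) (hFA' : ∀ v : ℝ, HasDerivAt FA (A v) v)
    (u : ℝ → ℝ → ℝ)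
    (hu : ContDiffOn ℝ ∞ (fun p : ℝ × ℝ => u p.1 p.2) (univ ×ˢ I))
    (hpde : ∀ t : ℝ, ∀ x ∈ I,
      f x * deriv (fun s => u s x) t
        = deriv (fun y => A (u t y) * deriv (fun z => u t z) y) x
          + h x * deriv (fun y => u t y) x) :
    ∀ t : ℝ, ∀ x ∈ I,
      deriv (fun s => Real.exp s * x * f x * u s x) t
        + deriv (fun y =>
            -(Real.exp t * (y * A (u t y) * deriv (fun z => u t z) y
                + y * h y * u t y - FA (u t y)))) x = 0 :=
  conservation_law_case_B_one_f_hx_plus_h_over_x_general I hIopen hIpos h f hh hfdef A FA hA hFA' u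
    hu hpde
end

section
/- Let I ⊆ ℝ be an open interval, let h : I → ℝ be smooth and nowhere zero such that f(x) := −h(x)·(1/h)″(x) is nowhere zero on I, let B : ℝ → ℝ be smooth, and let 𝔅 : ℝ → ℝ be smooth with 𝔅′ = B. Then for every smooth solution u : ℝ × I → ℝ of the equation f(x)u_t = u_{xx} + h(x)B(u)u_x (the case A = 1, f = −h·(h^{−1})_{xx}), the pair F = e^t(1/h)″(x)·u, G = e^t((1/h)(x)·u_x − (1/h)′(x)·u + 𝔅(u)) satisfies the conservation-law identity ∂_t F + ∂_x G = 0 at every point of ℝ × I. -/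
open Set Real
open scoped ContDiff

/-! With `g = 1/h`, the hypothesis `f = -h g''` turns the equation into the adjoint relation
`g'' u_t = -g (u_xx + h B(u) u_x)`. Differentiating `G`, the `g' u_x` terms cancel and the
`g'' u` term cancels against `∂_t e^t` in `F`, leaving `e^t (g'' u_t + g u_xx + B(u) u_x)`,
which vanishes by that relation. -/

section Calculus

variable {𝕜 : Type*} [NontriviallyNormedField 𝕜] {n : WithTop ℕ∞} {I : Set 𝕜} {x : 𝕜}

theorem ContDiffOn.hasDerivAt_deriv {g : 𝕜 → 𝕜} (hg : ContDiffOn 𝕜 n g I) (hn : 2 ≤ n)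
    (hI : IsOpen I) (hx : x ∈ I) : HasDerivAt (deriv g) (deriv (deriv g) x) x :=
  (((hg.deriv_of_isOpen hI (m := 1) hn).contDiffAt (hI.mem_nhds hx)).differentiableAt
    one_ne_zero).hasDerivAt

theorem ContDiffOn.hasDerivAt_of_isOpen {g : 𝕜 → 𝕜} (hg : ContDiffOn 𝕜 n g I) (hn : n ≠ 0)
    (hI : IsOpen I) (hx : x ∈ I) : HasDerivAt g (deriv g x) x :=
  ((hg.contDiffAt (hI.mem_nhds hx)).differentiableAt hn).hasDerivAt

variable {u : 𝕜 → 𝕜 → 𝕜}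

theorem ContDiffOn.slice_right
    (hu : ContDiffOn 𝕜 n (fun p : 𝕜 × 𝕜 => u p.1 p.2) (univ ×ˢ I)) (t : 𝕜) :
    ContDiffOn 𝕜 n (u t) I :=
  hu.comp (contDiff_const.prodMk contDiff_id).contDiffOn fun _ hy => ⟨mem_univ t, hy⟩

theorem ContDiffOn.hasDerivAt_slice_left
    (hu : ContDiffOn 𝕜 n (fun p : 𝕜 × 𝕜 => u p.1 p.2) (univ ×ˢ I)) (hn : n ≠ 0)
    (hI : IsOpen I) (hx : x ∈ I) (t : 𝕜) :
    HasDerivAt (fun s => u s x) (deriv (fun s => u s x) t) t := by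
  have hut := (hu.contDiffAt ((isOpen_univ.prod hI).mem_nhds
    (mk_mem_prod (mem_univ t) hx))).differentiableAt hn
  exact (hut.comp t (differentiableAt_id.prodMk (differentiableAt_const x))).hasDerivAt

/-- `g w' - g' w` is the bilinear concomitant of `d²/dx²`, the flux of Green's identity. -/
theorem hasDerivAt_adjoint_flux {g w Φ : 𝕜 → 𝕜} {g₂ w₂ φ : 𝕜}
    (hg : HasDerivAt g (deriv g x) x) (hg' : HasDerivAt (deriv g) g₂ x)
    (hw : HasDerivAt w (deriv w x) x) (hw' : HasDerivAt (deriv w) w₂ x)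
    (hΦ : HasDerivAt Φ φ (w x)) :
    HasDerivAt (fun y => g y * deriv w y - deriv g y * w y + Φ (w y))
      (g x * w₂ - g₂ * w x + φ * deriv w x) x := by
  refine (((hg.mul hw').sub (hg'.mul hw)).add (hΦ.comp x hw)).congr_deriv ?_
  ring

end Calculus

theorem conservation_law_case_A_one_general
    (I : Set ℝ) (hIopen : IsOpen I)
    (h f : ℝ → ℝ) (hh : ContDiffOn ℝ ∞ h I) (hh0 : ∀ x ∈ I, h x ≠ 0)
    (hfdef : ∀ x ∈ I, f x = -(h x * deriv (deriv (fun y => (h y)⁻¹)) x))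
    (B FB : ℝ → ℝ) (hFB' : ∀ v : ℝ, HasDerivAt FB (B v) v)
    (u : ℝ → ℝ → ℝ)
    (hu : ContDiffOn ℝ ∞ (fun p : ℝ × ℝ => u p.1 p.2) (univ ×ˢ I))
    (hpde : ∀ t : ℝ, ∀ x ∈ I,
      f x * deriv (fun s => u s x) t
        = deriv (deriv (fun y => u t y)) x
          + h x * B (u t x) * deriv (fun y => u t y) x) :
    ∀ t : ℝ, ∀ x ∈ I,
      deriv (fun s => Real.exp s * deriv (deriv (fun y => (h y)⁻¹)) x * u s x) t
        + deriv (fun y =>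
            Real.exp t * ((h y)⁻¹ * deriv (fun z => u t z) y
              - deriv (fun z => (h z)⁻¹) y * u t y + FB (u t y))) x = 0 := by
  intro t x hx
  have hg : ContDiffOn ℝ ∞ (fun y => (h y)⁻¹) I := hh.inv hh0
  have hw : ContDiffOn ℝ ∞ (u t) I := hu.slice_right t
  have hn : (∞ : WithTop ℕ∞) ≠ 0 := by simp
  have h2 : (2 : WithTop ℕ∞) ≤ ∞ := WithTop.coe_le_coe.2 le_top
  have hF := ((Real.hasDerivAt_exp t).mul_const (deriv (deriv (fun y => (h y)⁻¹)) x)).fun_mul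
    (hu.hasDerivAt_slice_left hn hIopen hx t)
  have hG := (hasDerivAt_adjoint_flux (hg.hasDerivAt_of_isOpen hn hIopen hx)
    (hg.hasDerivAt_deriv h2 hIopen hx) (hw.hasDerivAt_of_isOpen hn hIopen hx)
    (hw.hasDerivAt_deriv h2 hIopen hx) (hFB' (u t x))).const_mul (Real.exp t)
  have hadjoint : deriv (deriv (fun y => (h y)⁻¹)) x * deriv (fun s => u s x) t
      = -((h x)⁻¹ * deriv (deriv (fun y => u t y)) x
          + B (u t x) * deriv (fun y => u t y) x) := by
    have hpde' := hpde t x hx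
    rw [hfdef x hx] at hpde'
    -- otherwise `field_simp` also rewrites the `(h y)⁻¹` under the binder of `deriv`
    generalize deriv (deriv (fun y => (h y)⁻¹)) x = c at hpde' ⊢
    field_simp [hh0 x hx]
    linear_combination -hpde'
  rw [hF.deriv, hG.deriv]
  linear_combination Real.exp t * hadjoint

/-- For the equation `f(x) u_t = u_xx + h(x) B(u) u_x` with
`f = -h (1/h)''` nowhere zero (the case `A = 1`, `f = -h (h⁻¹)_xx`), the pair
`F = e^t (1/h)''(x) u`, `G = e^t ((1/h)(x) u_x - (1/h)'(x) u + 𝔅(u))` (where `𝔅' = B`)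
is a conserved vector. -/
theorem conservation_law_case_A_one
    (I : Set ℝ) (hIopen : IsOpen I) (hIconn : Convex ℝ I)
    (h f : ℝ → ℝ) (hh : ContDiffOn ℝ ∞ h I) (hh0 : ∀ x ∈ I, h x ≠ 0)
    (hfdef : ∀ x ∈ I, f x = -(h x * deriv (deriv (fun y => (h y)⁻¹)) x))
    (hf0 : ∀ x ∈ I, f x ≠ 0)
    (B FB : ℝ → ℝ) (hB : ContDiff ℝ ∞ B)
    (hFB : ContDiff ℝ ∞ FB) (hFB' : ∀ v : ℝ, HasDerivAt FB (B v) v)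
    (u : ℝ → ℝ → ℝ)
    (hu : ContDiffOn ℝ ∞ (fun p : ℝ × ℝ => u p.1 p.2) (univ ×ˢ I))
    (hpde : ∀ t : ℝ, ∀ x ∈ I,
      f x * deriv (fun s => u s x) t
        = deriv (deriv (fun y => u t y)) x
          + h x * B (u t x) * deriv (fun y => u t y) x) :
    ∀ t : ℝ, ∀ x ∈ I,
      deriv (fun s => Real.exp s * deriv (deriv (fun y => (h y)⁻¹)) x * u s x) t
        + deriv (fun y =>
            Real.exp t * ((h y)⁻¹ * deriv (fun z => u t z) y
              - deriv (fun z => (h z)⁻¹) y * u t y + FB (u t y))) x = 0 :=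
  conservation_law_case_A_one_general I hIopen h f hh hh0 hfdef B FB hFB' u hu hpde
end

section
/- Let I ⊆ (0,∞) be an open interval, let f : I → ℝ be smooth and nowhere zero, let A, B : ℝ → ℝ be smooth, and let 𝔄, 𝔅 : ℝ → ℝ be smooth with 𝔄′ = A and 𝔅′ = B. Then for every smooth solution u : ℝ × I → ℝ of the equation f(x)u_t = (A(u)u_x)_x + x^{−1}B(u)u_x (the case h = x^{−1}), the pair F = x f(x)u, G = −x·A(u)u_x + 𝔄(u) − 𝔅(u) satisfies the conservation-law identity ∂_t F + ∂_x G = 0 at every point of ℝ × I. -/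
open Set Real
open scoped ContDiff

/-- For the equation `f(x) u_t = (A(u) u_x)_x + x⁻¹ B(u) u_x` on
`I ⊆ (0,∞)` (the case `h = x⁻¹`), the pair `F = x f(x) u`,
`G = -x A(u) u_x + 𝔄(u) - 𝔅(u)` (where `𝔄' = A`, `𝔅' = B`) is a conserved vector. -/
theorem conservation_law_case_h_inv_x
    (I : Set ℝ) (hIopen : IsOpen I) (hIconn : Convex ℝ I) (hIpos : I ⊆ Ioi (0:ℝ))
    (f : ℝ → ℝ) (hf : ContDiffOn ℝ ∞ f I) (hf0 : ∀ x ∈ I, f x ≠ 0)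
    (A B FA FB : ℝ → ℝ) (hA : ContDiff ℝ ∞ A) (hB : ContDiff ℝ ∞ B)
    (hFA : ContDiff ℝ ∞ FA) (hFA' : ∀ v : ℝ, HasDerivAt FA (A v) v)
    (hFB : ContDiff ℝ ∞ FB) (hFB' : ∀ v : ℝ, HasDerivAt FB (B v) v)
    (u : ℝ → ℝ → ℝ)
    (hu : ContDiffOn ℝ ∞ (fun p : ℝ × ℝ => u p.1 p.2) (univ ×ˢ I))
    (hpde : ∀ t : ℝ, ∀ x ∈ I,
      f x * deriv (fun s => u s x) t
        = deriv (fun y => A (u t y) * deriv (fun z => u t z) y) x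
          + x⁻¹ * B (u t x) * deriv (fun y => u t y) x) :
    ∀ t : ℝ, ∀ x ∈ I,
      deriv (fun s => x * f x * u s x) t
        + deriv (fun y =>
            -(y * A (u t y) * deriv (fun z => u t z) y)
              + FA (u t y) - FB (u t y)) x = 0 := by
  intro t x hx
  have hx0 : (x:ℝ) ≠ 0 := ne_of_gt (hIpos hx)
  -- spatial slice
  have hg : ContDiffOn ℝ ∞ (fun y => u t y) I := by
    have hmap : ContDiff ℝ ∞ (fun y : ℝ => ((t, y) : ℝ × ℝ)) :=
      contDiff_const.prodMk contDiff_id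
    exact hu.comp hmap.contDiffOn (fun y hy => ⟨mem_univ _, hy⟩)
  have hw : ContDiffOn ℝ ∞ (deriv (fun y => u t y)) I :=
    hg.deriv_of_isOpen hIopen (by simp)
  have hgx : DifferentiableAt ℝ (fun y => u t y) x :=
    (hg.contDiffAt (hIopen.mem_nhds hx)).differentiableAt (by simp)
  have hwx : DifferentiableAt ℝ (deriv (fun y => u t y)) x :=
    (hw.contDiffAt (hIopen.mem_nhds hx)).differentiableAt (by simp)
  set u0 := u t x with hu0
  set p := deriv (fun y => u t y) x with hp
  set q := deriv (deriv (fun y => u t y)) x with hq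
  have hgd : HasDerivAt (fun y => u t y) p x := hgx.hasDerivAt
  have hwd : HasDerivAt (deriv (fun y => u t y)) q x := hwx.hasDerivAt
  have hAd : HasDerivAt A (deriv A u0) u0 :=
    ((hA.differentiable (by simp)) u0).hasDerivAt
  have hAg : HasDerivAt (fun y => A (u t y)) (deriv A u0 * p) x := hAd.comp x hgd
  -- derivative of A(u) u_x
  have hAw : HasDerivAt (fun y => A (u t y) * deriv (fun z => u t z) y)
      (deriv A u0 * p * p + A u0 * q) x := hAg.mul hwd
  -- time slice
  have hT : DifferentiableAt ℝ (fun s => u s x) t := by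
    have hmap : ContDiff ℝ ∞ (fun s : ℝ => ((s, x) : ℝ × ℝ)) :=
      contDiff_id.prodMk contDiff_const
    have h1 : ContDiffOn ℝ ∞ (fun s => u s x) univ :=
      hu.comp hmap.contDiffOn (fun s _ => ⟨mem_univ _, hx⟩)
    exact ((h1.contDiffAt (by simp)).differentiableAt (by simp))
  set r := deriv (fun s => u s x) t with hr
  -- time part of the conserved vector
  have hTF : deriv (fun s => x * f x * u s x) t = x * f x * r := by
    rw [deriv_const_mul _ hT]
  -- spatial part
  have hGd : HasDerivAt (fun y =>
      -(y * A (u t y) * deriv (fun z => u t z) y) + FA (u t y) - FB (u t y))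
      (-( (1 * A u0 + x * (deriv A u0 * p)) * p + (x * A u0) * q)
        + A u0 * p - B u0 * p) x := by
    have h1 : HasDerivAt (fun y => y * A (u t y))
        (1 * A u0 + x * (deriv A u0 * p)) x :=
      (hasDerivAt_id x).mul hAg
    have h2 : HasDerivAt (fun y => y * A (u t y) * deriv (fun z => u t z) y)
        ((1 * A u0 + x * (deriv A u0 * p)) * p + (x * A u0) * q) x := h1.mul hwd
    have h3 : HasDerivAt (fun y => FA (u t y)) (A u0 * p) x :=
      (hFA' u0).comp x hgd
    have h4 : HasDerivAt (fun y => FB (u t y)) (B u0 * p) x :=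
      (hFB' u0).comp x hgd
    exact (h2.neg.add h3).sub h4
  rw [hTF, hGd.deriv]
  have hpde' := hpde t x hx
  rw [hAw.deriv] at hpde'
  -- hpde' : f x * r = deriv A u0 * p * p + A u0 * q + x⁻¹ * B u0 * p
  have hxr : x * (f x * r) = x * (deriv A u0 * p * p + A u0 * q + x⁻¹ * B u0 * p) := by
    rw [hpde']
  field_simp at hxr
  nlinarith [hxr]
end

section
/- Let I ⊆ ℝ be an open interval, let f, h : I → ℝ be smooth with f nowhere zero, let ε ∈ ℝ, let A : ℝ → ℝ be smooth, let H : I → ℝ be smooth with H′ = h, let Y : I → ℝ be smooth with Y′(x) = e^{−εH(x)}, and let 𝔄 : ℝ → ℝ be smooth with 𝔄′ = A. Then for every smooth solution u : ℝ × I → ℝ of the equation f(x)u_t = (A(u)u_x)_x + ε h(x)A(u)u_x (the case B = εA), both pairs F₁ = e^{εH(x)}f(x)u, G₁ = −e^{εH(x)}A(u)u_x and F₂ = Y(x)e^{εH(x)}f(x)u, G₂ = −Y(x)e^{εH(x)}A(u)u_x + 𝔄(u) satisfy the conservation-law identity ∂_t F + ∂_x G = 0 at every point of ℝ × I. -/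
open Set Real
open scoped ContDiff

/-!
Writing `w = A(u) u_x` for the flux, the integrating factor `e^{εH}` turns the equation into the
conserved form `e^{εH} f u_t = (e^{εH} w)_x`, which is the first law. For the second, the product
rule gives `(Y e^{εH} w)_x = Y' e^{εH} w + Y (e^{εH} w)_x = w + Y e^{εH} f u_t` because
`Y' e^{εH} = 1`, and the extra term `w = 𝔄(u)_x` is cancelled by the summand `𝔄(u)` of
`G₂`.
-/

section Slices

variable {n : WithTop ℕ∞} {u : ℝ → ℝ → ℝ} {s I : Set ℝ} {t x : ℝ}

theorem ContDiffOn.slice_of_uncurry (hu : ContDiffOn ℝ n (Function.uncurry u) (s ×ˢ I))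
    (ht : t ∈ s) : ContDiffOn ℝ n (u t) I :=
  hu.comp (contDiff_const.prodMk contDiff_id).contDiffOn fun _ hy => ⟨ht, hy⟩

theorem ContDiffOn.hasDerivAt_fst_slice_of_uncurry
    (hu : ContDiffOn ℝ n (Function.uncurry u) (s ×ˢ I)) (hn : n ≠ 0)
    (hs : IsOpen s) (hI : IsOpen I) (ht : t ∈ s) (hx : x ∈ I) :
    HasDerivAt (fun r => u r x) (deriv (fun r => u r x) t) t := by
  have hdiff : DifferentiableAt ℝ (Function.uncurry u) (t, x) :=
    (hu.contDiffAt ((hs.prod hI).mem_nhds ⟨ht, hx⟩)).differentiableAt hn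
  exact (hdiff.comp t (differentiableAt_id.prodMk (differentiableAt_const x))).hasDerivAt

end Slices

section IntegratingFactor

variable {H h Y w : ℝ → ℝ} {ε x w' : ℝ}

theorem hasDerivAt_integratingFactor_mul (hH : HasDerivAt H (h x) x) (hw : HasDerivAt w w' x) :
    HasDerivAt (fun y => exp (ε * H y) * w y) (exp (ε * H x) * (w' + ε * h x * w x)) x :=
  (((hH.const_mul ε).exp).mul hw).congr_deriv (by ring)

theorem hasDerivAt_mul_integratingFactor_mul (hY : HasDerivAt Y (exp (-(ε * H x))) x)
    (hH : HasDerivAt H (h x) x) (hw : HasDerivAt w w' x) :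
    HasDerivAt (fun y => Y y * (exp (ε * H y) * w y))
      (w x + Y x * (exp (ε * H x) * (w' + ε * h x * w x))) x :=
  (hY.mul (hasDerivAt_integratingFactor_mul hH hw)).congr_deriv <| by
    rw [← mul_assoc, ← exp_add, neg_add_cancel, exp_zero, one_mul]

end IntegratingFactor

theorem conservation_laws_case_B_eps_A_general
    (I : Set ℝ) (hIopen : IsOpen I)
    (f h : ℝ → ℝ)
    (ε : ℝ) (A FA : ℝ → ℝ) (hA : ContDiff ℝ ∞ A)
    (hFA' : ∀ v : ℝ, HasDerivAt FA (A v) v)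
    (H Y : ℝ → ℝ)
    (hH' : ∀ x ∈ I, HasDerivAt H (h x) x)
    (hY' : ∀ x ∈ I, HasDerivAt Y (Real.exp (-(ε * H x))) x)
    (u : ℝ → ℝ → ℝ)
    (hu : ContDiffOn ℝ ∞ (fun p : ℝ × ℝ => u p.1 p.2) (univ ×ˢ I))
    (hpde : ∀ t : ℝ, ∀ x ∈ I,
      f x * deriv (fun s => u s x) t
        = deriv (fun y => A (u t y) * deriv (fun z => u t z) y) x
          + ε * h x * A (u t x) * deriv (fun y => u t y) x) :
    ∀ t : ℝ, ∀ x ∈ I,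
      (deriv (fun s => Real.exp (ε * H x) * f x * u s x) t
        + deriv (fun y =>
            -(Real.exp (ε * H y) * A (u t y) * deriv (fun z => u t z) y)) x = 0)
      ∧ (deriv (fun s => Y x * Real.exp (ε * H x) * f x * u s x) t
        + deriv (fun y =>
            -(Y y * Real.exp (ε * H y) * A (u t y) * deriv (fun z => u t z) y)
              + FA (u t y)) x = 0) := by
  intro t x hx
  have hU : ContDiffOn ℝ ∞ (u t) I := ContDiffOn.slice_of_uncurry hu (mem_univ t)
  have hut := ContDiffOn.hasDerivAt_fst_slice_of_uncurry hu (by simp) isOpen_univ hIopen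
    (mem_univ t) hx
  have hux : HasDerivAt (u t) (deriv (u t) x) x :=
    ((hU.contDiffAt (hIopen.mem_nhds hx)).differentiableAt (by simp)).hasDerivAt
  set w : ℝ → ℝ := fun y => A (u t y) * deriv (u t) y with hw_def
  have hw : HasDerivAt w (deriv w x) x :=
    ((((hA.comp_contDiffOn hU).mul (hU.deriv_of_isOpen hIopen (by simp))).contDiffAt
      (hIopen.mem_nhds hx)).differentiableAt (by simp)).hasDerivAt
  have hpde' : f x * deriv (fun s => u s x) t = deriv w x + ε * h x * w x := by
    rw [hpde t x hx]; ring
  have hG₁ : HasDerivAt (fun y => -(exp (ε * H y) * A (u t y) * deriv (fun z => u t z) y))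
      (-(exp (ε * H x) * (deriv w x + ε * h x * w x))) x :=
    (hasDerivAt_integratingFactor_mul (hH' x hx) hw).fun_neg.congr_of_eventuallyEq <|
      .of_forall fun y => by simp only [hw_def]; ring
  have hG₂ : HasDerivAt (fun y => -(Y y * exp (ε * H y) * A (u t y) * deriv (fun z => u t z) y)
      + FA (u t y)) (-(Y x * (exp (ε * H x) * (deriv w x + ε * h x * w x)))) x :=
    ((hasDerivAt_mul_integratingFactor_mul (hY' x hx) (hH' x hx) hw).fun_neg.fun_add
      ((hFA' (u t x)).comp x hux)).congr_deriv (by simp only [hw_def]; ring)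
      |>.congr_of_eventuallyEq <| .of_forall fun y => by
        simp only [hw_def, Function.comp_apply]; ring
  constructor
  · rw [(hut.const_mul _).deriv, hG₁.deriv]
    linear_combination exp (ε * H x) * hpde'
  · rw [(hut.const_mul _).deriv, hG₂.deriv]
    linear_combination Y x * exp (ε * H x) * hpde'

/-- For the equation `f(x) u_t = (A(u) u_x)_x + ε h(x) A(u) u_x`
(the case `B = ε A`), with `H' = h`, `Y' = e^{-εH}` and `𝔄' = A`, both pairs
`F₁ = e^{εH(x)} f(x) u`, `G₁ = -e^{εH(x)} A(u) u_x` and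
`F₂ = Y(x) e^{εH(x)} f(x) u`, `G₂ = -Y(x) e^{εH(x)} A(u) u_x + 𝔄(u)` are
conserved vectors. -/
theorem conservation_laws_case_B_eps_A
    (I : Set ℝ) (hIopen : IsOpen I) (hIconn : Convex ℝ I)
    (f h : ℝ → ℝ) (hf : ContDiffOn ℝ ∞ f I) (hf0 : ∀ x ∈ I, f x ≠ 0)
    (hh : ContDiffOn ℝ ∞ h I)
    (ε : ℝ) (A FA : ℝ → ℝ) (hA : ContDiff ℝ ∞ A)
    (hFA : ContDiff ℝ ∞ FA) (hFA' : ∀ v : ℝ, HasDerivAt FA (A v) v)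
    (H Y : ℝ → ℝ) (hH : ContDiffOn ℝ ∞ H I) (hY : ContDiffOn ℝ ∞ Y I)
    (hH' : ∀ x ∈ I, HasDerivAt H (h x) x)
    (hY' : ∀ x ∈ I, HasDerivAt Y (Real.exp (-(ε * H x))) x)
    (u : ℝ → ℝ → ℝ)
    (hu : ContDiffOn ℝ ∞ (fun p : ℝ × ℝ => u p.1 p.2) (univ ×ˢ I))
    (hpde : ∀ t : ℝ, ∀ x ∈ I,
      f x * deriv (fun s => u s x) t
        = deriv (fun y => A (u t y) * deriv (fun z => u t z) y) x
          + ε * h x * A (u t x) * deriv (fun y => u t y) x) :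
    ∀ t : ℝ, ∀ x ∈ I,
      (deriv (fun s => Real.exp (ε * H x) * f x * u s x) t
        + deriv (fun y =>
            -(Real.exp (ε * H y) * A (u t y) * deriv (fun z => u t z) y)) x = 0)
      ∧ (deriv (fun s => Y x * Real.exp (ε * H x) * f x * u s x) t
        + deriv (fun y =>
            -(Y y * Real.exp (ε * H y) * A (u t y) * deriv (fun z => u t z) y)
              + FA (u t y)) x = 0) :=
  conservation_laws_case_B_eps_A_general I hIopen f h ε A FA hA hFA' H Y hH' hY' u hu hpde
end

section
/- Let μ ∈ ℝ with μ + 1 ≠ 0, let A : ℝ → ℝ be smooth, and let u : ℝ × (0,∞) → ℝ be a smooth solution of x^{μ−1}u_t = (A(u)u_x)_x + x^{μ}u_x. Define T(t) = (e^{(μ+1)t} − 1)/(μ+1) and define v on {(T(t), e^t x) : t ∈ ℝ, x > 0} by v(T(t), e^t x) = u(t, x). Then v = v(s, y) is a smooth solution of y^{μ−1}v_s = (A(v)v_y)_y; i.e. the point transformation t̃ = (μ+1)^{−1}(e^{(μ+1)t} − 1), x̃ = e^t x, ũ = u maps the equation of Case 2d (B = 1, f = x^{μ−1}, h = x^{μ})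 to an equation of Case 2a (B = 0). -/
open Set Real
open scoped ContDiff

/-!
Writing `S` for the inverse of the time change `T`, the transformed function is
`v(s, y) = u(S s, e^{-S s} y)` on the open set `range T × (0, ∞)`, hence smooth. With
`x = e^{-t} y` the chain rule gives `v_s = e^{-(μ+1)t} (u_t - x u_x)` and
`(A(v) v_y)_y = e^{-2t} (A(u) u_x)_x`, while `y^{μ-1} = e^{(μ-1)t} x^{μ-1}`; so the convection
term `x^μ u_x` of the original equation is exactly absorbed by the moving frame `x = e^{-t} y`.
-/

open Filter Topology Function

noncomputable def timeChange (μ t : ℝ) : ℝ := (exp ((μ + 1) * t) - 1) / (μ + 1)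

noncomputable def timeChangeInv (μ s : ℝ) : ℝ := log ((μ + 1) * s + 1) / (μ + 1)

section TimeChange

variable {μ : ℝ}

lemma add_one_mul_timeChange_add_one (hμ : μ + 1 ≠ 0) (t : ℝ) :
    (μ + 1) * timeChange μ t + 1 = exp ((μ + 1) * t) := by
  rw [timeChange]; field_simp; ring

lemma timeChangeInv_timeChange (hμ : μ + 1 ≠ 0) (t : ℝ) :
    timeChangeInv μ (timeChange μ t) = t := by
  rw [timeChangeInv, add_one_mul_timeChange_add_one hμ, log_exp, mul_div_cancel_left₀ _ hμ]

lemma range_timeChange (hμ : μ + 1 ≠ 0) :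
    range (timeChange μ) = {s | 0 < (μ + 1) * s + 1} := by
  ext s
  constructor
  · rintro ⟨t, rfl⟩
    simp only [mem_ofPred_eq, add_one_mul_timeChange_add_one hμ, exp_pos]
  · intro hs
    refine ⟨timeChangeInv μ s, ?_⟩
    rw [timeChange, timeChangeInv, mul_div_cancel₀ _ hμ, exp_log hs, add_sub_cancel_right,
      mul_div_cancel_left₀ _ hμ]

lemma isOpen_range_timeChange (hμ : μ + 1 ≠ 0) : IsOpen (range (timeChange μ)) := by
  rw [range_timeChange hμ]
  exact isOpen_lt continuous_const (by fun_prop)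

lemma hasDerivAt_timeChangeInv (hμ : μ + 1 ≠ 0) (t : ℝ) :
    HasDerivAt (timeChangeInv μ) (exp (-((μ + 1) * t))) (timeChange μ t) := by
  have hlin : HasDerivAt (fun s => (μ + 1) * s + 1) (μ + 1) (timeChange μ t) := by
    simpa using ((hasDerivAt_id _).const_mul (μ + 1)).add_const 1
  have hpos : (μ + 1) * timeChange μ t + 1 ≠ 0 := by
    rw [add_one_mul_timeChange_add_one hμ]; exact (exp_pos _).ne'
  refine (((hasDerivAt_log hpos).comp (timeChange μ t) hlin).div_const (μ + 1)).congr_deriv ?_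
  rw [exp_neg, ← add_one_mul_timeChange_add_one hμ]
  field_simp

lemma contDiffOn_timeChangeInv {n : WithTop ℕ∞} :
    ContDiffOn ℝ n (timeChangeInv μ) {s | 0 < (μ + 1) * s + 1} :=
  (contDiffOn_log.comp (by fun_prop : ContDiff ℝ n fun s => (μ + 1) * s + 1).contDiffOn
    fun _ hs => hs.ne').div_const _

end TimeChange

section Calculus

variable {u : ℝ → ℝ → ℝ} {t x : ℝ}

lemma DifferentiableAt.hasDerivAt_uncurry_left (hu : DifferentiableAt ℝ (uncurry u) (t, x)) :
    HasDerivAt (fun s => u s x) (fderiv ℝ (uncurry u) (t, x) (1, 0)) t :=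
  hu.hasFDerivAt.comp_hasDerivAt (l := uncurry u) t
    ((hasDerivAt_id' t).prodMk (hasDerivAt_const t x))

lemma DifferentiableAt.hasDerivAt_uncurry_right (hu : DifferentiableAt ℝ (uncurry u) (t, x)) :
    HasDerivAt (u t) (fderiv ℝ (uncurry u) (t, x) (0, 1)) x :=
  hu.hasFDerivAt.comp_hasDerivAt (l := uncurry u) x
    ((hasDerivAt_const x t).prodMk (hasDerivAt_id' x))

lemma DifferentiableAt.hasDerivAt_uncurry_comp {γ : ℝ → ℝ} {γ' : ℝ}
    (hu : DifferentiableAt ℝ (uncurry u) (t, γ t)) (hγ : HasDerivAt γ γ' t) :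
    HasDerivAt (fun τ => u τ (γ τ))
      (deriv (fun s => u s (γ t)) t + γ' * deriv (u t) (γ t)) t := by
  have hcomp := hu.hasFDerivAt.comp_hasDerivAt (l := uncurry u) t ((hasDerivAt_id' t).prodMk hγ)
  rw [show ((1 : ℝ), γ') = (1, 0) + γ' • (0, 1) by simp, map_add, map_smul,
    ← hu.hasDerivAt_uncurry_left.deriv, ← hu.hasDerivAt_uncurry_right.deriv] at hcomp
  exact hcomp

lemma deriv_flux_of_eventuallyEq_comp_mul_left {A f g : ℝ → ℝ} {c y : ℝ}
    (h : f =ᶠ[𝓝 y] fun z => g (c * z)) :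
    deriv (fun z => A (f z) * deriv f z) y
      = c ^ 2 * deriv (fun z => A (g z) * deriv g z) (c * y) := by
  set F : ℝ → ℝ := fun w => A (g w) * deriv g w
  have hflux : (fun z => A (f z) * deriv f z) =ᶠ[𝓝 y] fun z => c * F (c * z) := by
    filter_upwards [h, h.deriv] with z hfz hdz
    rw [hfz, hdz, deriv_comp_mul_left, smul_eq_mul]
    ring
  rw [hflux.deriv_eq, deriv_const_mul_field, deriv_comp_mul_left, smul_eq_mul]
  ring

end Calculus

section Transfer

variable {μ : ℝ} {u v : ℝ → ℝ → ℝ}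

lemma exp_neg_mul_exp_mul (t x : ℝ) : exp (-t) * (exp t * x) = x := by
  rw [← mul_assoc, ← exp_add, neg_add_cancel, exp_zero, one_mul]

lemma apply_eq_apply_exp_neg_mul {T : ℝ → ℝ}
    (hv : ∀ t : ℝ, ∀ x ∈ Ioi (0:ℝ), v (T t) (exp t * x) = u t x) (t : ℝ) {y : ℝ} (hy : 0 < y) :
    v (T t) y = u t (exp (-t) * y) := by
  simpa [← mul_assoc, ← exp_add] using hv t _ (mul_pos (exp_pos (-t)) hy)

lemma eqOn_comp_timeChangeInv (hμ : μ + 1 ≠ 0)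
    (hv : ∀ t : ℝ, ∀ x ∈ Ioi (0:ℝ), v (timeChange μ t) (exp t * x) = u t x) :
    EqOn (uncurry v) (fun p => u (timeChangeInv μ p.1) (exp (-timeChangeInv μ p.1) * p.2))
      (range (timeChange μ) ×ˢ Ioi 0) := by
  rintro ⟨_, y⟩ ⟨⟨t, rfl⟩, hy⟩
  simp only [uncurry_apply_pair, timeChangeInv_timeChange hμ]
  exact apply_eq_apply_exp_neg_mul hv t hy

lemma contDiffOn_uncurry_of_apply_exp_mul {n : WithTop ℕ∞} (hμ : μ + 1 ≠ 0)
    (hu : ContDiffOn ℝ n (uncurry u) (univ ×ˢ Ioi 0))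
    (hv : ∀ t : ℝ, ∀ x ∈ Ioi (0:ℝ), v (timeChange μ t) (exp t * x) = u t x) :
    ContDiffOn ℝ n (uncurry v) (range (timeChange μ) ×ˢ Ioi 0) := by
  have hS : ContDiffOn ℝ n (fun p : ℝ × ℝ => timeChangeInv μ p.1)
      (range (timeChange μ) ×ˢ Ioi 0) :=
    contDiffOn_timeChangeInv.comp contDiff_fst.contDiffOn fun p hp => range_timeChange hμ ▸ hp.1
  refine (hu.comp (hS.prodMk ((contDiff_exp.comp_contDiffOn hS.neg).mul contDiff_snd.contDiffOn))
    fun p hp => ⟨mem_univ _, mul_pos (exp_pos _) hp.2⟩).congr (eqOn_comp_timeChangeInv hμ hv)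

lemma deriv_apply_timeChange (hμ : μ + 1 ≠ 0) {t x : ℝ} (hx : 0 < x)
    (hu : DifferentiableAt ℝ (uncurry u) (t, x))
    (hv : ∀ t : ℝ, ∀ x ∈ Ioi (0:ℝ), v (timeChange μ t) (exp t * x) = u t x) :
    deriv (fun s => v s (exp t * x)) (timeChange μ t)
      = exp (-((μ + 1) * t)) * (deriv (fun s => u s x) t - x * deriv (u t) x) := by
  set y := exp t * x
  have hγt : exp (-t) * y = x := exp_neg_mul_exp_mul t x
  have hγ : HasDerivAt (fun τ => exp (-τ) * y) (-x) t := by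
    refine ((hasDerivAt_neg t).exp.mul_const y).congr_deriv ?_
    rw [← hγt]; ring
  have hg := (hγt ▸ hu).hasDerivAt_uncurry_comp hγ
  rw [hγt] at hg
  have heq : (fun s => v s y) =ᶠ[𝓝 (timeChange μ t)]
      (fun τ => u τ (exp (-τ) * y)) ∘ timeChangeInv μ := by
    filter_upwards [(isOpen_range_timeChange hμ).mem_nhds (mem_range_self t)] with s hs
    exact eqOn_comp_timeChangeInv hμ hv (show (s, y) ∈ _ from ⟨hs, mul_pos (exp_pos t) hx⟩)
  rw [heq.deriv_eq, (hg.comp_of_eq (timeChange μ t) (hasDerivAt_timeChangeInv hμ t)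
    (timeChangeInv_timeChange hμ t).symm).deriv]
  ring

end Transfer

theorem transformation_case2d_to_case2a_general
    (μ : ℝ) (hμ : μ + 1 ≠ 0)
    (A : ℝ → ℝ)
    (u : ℝ → ℝ → ℝ)
    (hu : ContDiffOn ℝ ∞ (fun p : ℝ × ℝ => u p.1 p.2) (univ ×ˢ Ioi 0))
    (hpde : ∀ t : ℝ, ∀ x ∈ Ioi (0:ℝ),
      x ^ (μ - 1) * deriv (fun s => u s x) t
        = deriv (fun y => A (u t y) * deriv (fun z => u t z) y) x
          + x ^ μ * deriv (fun y => u t y) x)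
    (T : ℝ → ℝ) (hT : ∀ t : ℝ, T t = (Real.exp ((μ + 1) * t) - 1) / (μ + 1))
    (v : ℝ → ℝ → ℝ)
    (hvdef : ∀ t : ℝ, ∀ x ∈ Ioi (0:ℝ), v (T t) (Real.exp t * x) = u t x) :
    ContDiffOn ℝ ∞ (fun p : ℝ × ℝ => v p.1 p.2) (range T ×ˢ Ioi 0)
      ∧ ∀ t : ℝ, ∀ x ∈ Ioi (0:ℝ),
          (Real.exp t * x) ^ (μ - 1) * deriv (fun s => v s (Real.exp t * x)) (T t)
            = deriv (fun y => A (v (T t) y) * deriv (fun z => v (T t) z) y)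
                (Real.exp t * x) := by
  obtain rfl : T = timeChange μ := funext hT
  refine ⟨contDiffOn_uncurry_of_apply_exp_mul hμ hu hvdef, fun t x hx => ?_⟩
  have hx' : 0 < x := hx
  have hud : DifferentiableAt ℝ (uncurry u) (t, x) :=
    (hu.differentiableOn (by simp)).differentiableAt
      ((isOpen_univ.prod isOpen_Ioi).mem_nhds ⟨mem_univ t, hx⟩)
  have hscale : (fun y => v (timeChange μ t) y) =ᶠ[𝓝 (exp t * x)]
      fun y => u t (exp (-t) * y) :=
    eventually_of_mem (isOpen_Ioi.mem_nhds (mul_pos (exp_pos t) hx')) fun y hy =>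
      apply_eq_apply_exp_neg_mul hvdef t hy
  have hpow : (exp t * x) ^ (μ - 1) = exp (t * (μ - 1)) * x ^ (μ - 1) := by
    rw [mul_rpow (exp_pos t).le hx'.le, ← exp_mul]
  have hxμ : x ^ μ = x ^ (μ - 1) * x := by rw [← rpow_add_one hx'.ne', sub_add_cancel]
  have hexp : exp (t * (μ - 1)) * exp (-((μ + 1) * t)) = exp (-t) ^ 2 := by
    rw [← exp_add, sq, ← exp_add]; ring_nf
  rw [deriv_apply_timeChange hμ hx hud hvdef, deriv_flux_of_eventuallyEq_comp_mul_left hscale,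
    exp_neg_mul_exp_mul, hpow]
  linear_combination exp (-t) ^ 2 * hpde t x hx
    + x ^ (μ - 1) * (deriv (fun s => u s x) t - x * deriv (u t) x) * hexp
    + exp (-t) ^ 2 * deriv (u t) x * hxμ

/-- For `μ + 1 ≠ 0`, the point transformation
`t̃ = (μ+1)⁻¹(e^{(μ+1)t} - 1)`, `x̃ = e^t x`, `ũ = u` maps the equation
`x^{μ-1} u_t = (A(u) u_x)_x + x^μ u_x` on `(0,∞)` (Case 2d) to the convection-free
equation `y^{μ-1} v_s = (A(v) v_y)_y` (Case 2a): if `u` is a smooth solution of the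
former and `v(T(t), e^t x) = u(t, x)` with `T(t) = (e^{(μ+1)t} - 1)/(μ+1)`, then `v`
is a smooth solution of the latter on `T(ℝ) × (0,∞)`. -/
theorem transformation_case2d_to_case2a
    (μ : ℝ) (hμ : μ + 1 ≠ 0)
    (A : ℝ → ℝ) (hA : ContDiff ℝ ∞ A)
    (u : ℝ → ℝ → ℝ)
    (hu : ContDiffOn ℝ ∞ (fun p : ℝ × ℝ => u p.1 p.2) (univ ×ˢ Ioi 0))
    (hpde : ∀ t : ℝ, ∀ x ∈ Ioi (0:ℝ),
      x ^ (μ - 1) * deriv (fun s => u s x) t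
        = deriv (fun y => A (u t y) * deriv (fun z => u t z) y) x
          + x ^ μ * deriv (fun y => u t y) x)
    (T : ℝ → ℝ) (hT : ∀ t : ℝ, T t = (Real.exp ((μ + 1) * t) - 1) / (μ + 1))
    (v : ℝ → ℝ → ℝ)
    (hvdef : ∀ t : ℝ, ∀ x ∈ Ioi (0:ℝ), v (T t) (Real.exp t * x) = u t x) :
    ContDiffOn ℝ ∞ (fun p : ℝ × ℝ => v p.1 p.2) (range T ×ˢ Ioi 0)
      ∧ ∀ t : ℝ, ∀ x ∈ Ioi (0:ℝ),
          (Real.exp t * x) ^ (μ - 1) * deriv (fun s => v s (Real.exp t * x)) (T t)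
            = deriv (fun y => A (v (T t) y) * deriv (fun z => v (T t) z) y)
                (Real.exp t * x) :=
  transformation_case2d_to_case2a_general μ hμ A u hu hpde T hT v hvdef
end
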